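/- arXiv:1708.07460 — 8 statements merged into one kernel-verified Lean document; each statement's English description precedes it below -/
import Mathlib

section
/- Let f, g : [0,1] → [0,1]² be continuous functions such that f(0) = (0,0), f(1) = (1,1), g(0) = (0,1) and g(1) = (1,0). Then the curves range(f) and range(g) intersect, i.e., there exist s, t ∈ [0,1] with f(s) = g(t). -/
/-!
If the curves were disjoint, `H (s, t) = f s - g t`, read as a complex number, would not vanish
on the simply connected square `[0,1]²`, so `H` would have a continuous argument `θ` there.
The corner conditions put `H` in a fixed closed quadrant along each edge of the square
(`f s - g 0` in the fourth, `f 1 - g t` in the first, `f s - g 1` in the second, `f 0 - g t` in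
the third), so `θ` grows by exactly `π / 2` along each edge as the boundary is traversed
counterclockwise from `(0, 0)`: going once round would change the value `θ (0, 0)` by `2π`.
-/

open Set

noncomputable section

/-- The Euclidean plane. -/
abbrev E2 := EuclideanSpace ℝ (Fin 2)

/-- The point `(x, y)` of the Euclidean plane. -/
def pt (x y : ℝ) : E2 := WithLp.toLp 2 ![x, y]

/-- The closed unit square `[0,1]²`. -/
def unitSq : Set E2 := {p | p 0 ∈ Icc (0:ℝ) 1 ∧ p 1 ∈ Icc (0:ℝ) 1}

/-- The open unit square `(0,1)²`. -/
def openUnitSq : Set E2 := {p | p 0 ∈ Ioo (0:ℝ) 1 ∧ p 1 ∈ Ioo (0:ℝ) 1}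

open Real

namespace IsPreconnected

variable {X : Type*} [TopologicalSpace X] {S : Set X} {θ : X → ℝ} {x₀ : X} {a : ℝ}

theorem mem_Icc_of_cos_sin_nonneg (hS : IsPreconnected S) (hθ : ContinuousOn θ S)
    (hx₀ : x₀ ∈ S) (ha : θ x₀ = a)
    (hQ : ∀ x ∈ S, 0 ≤ cos (θ x - a) ∧ 0 ≤ sin (θ x - a)) {x : X} (hx : x ∈ S) :
    θ x ∈ Icc a (a + π / 2) := by
  have hπ := pi_pos
  constructor
  · by_contra! hlt
    set c := max (θ x) (a - π / 2)
    obtain ⟨y, hy, hyc⟩ : c ∈ θ '' S :=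
      hS.intermediate_value hx hx₀ hθ ⟨le_max_left _ _, ha ▸ max_le hlt.le (by linarith)⟩
    have hsin : sin (c - a) < 0 :=
      sin_neg_of_neg_of_neg_pi_lt (sub_neg.mpr (max_lt hlt (by linarith)))
        (by linarith [le_max_right (θ x) (a - π / 2)])
    linarith [(hQ y hy).2, hyc ▸ hsin]
  · by_contra! hlt
    set c := min (θ x) (a + π)
    obtain ⟨y, hy, hyc⟩ : c ∈ θ '' S :=
      hS.intermediate_value hx₀ hx hθ ⟨ha ▸ le_min (by linarith) (by linarith), min_le_left _ _⟩
    have hcos : cos (c - a) < 0 :=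
      cos_neg_of_pi_div_two_lt_of_lt (by linarith [lt_min hlt (show a + π / 2 < a + π by linarith)])
        (by linarith [min_le_right (θ x) (a + π)])
    linarith [(hQ y hy).1, hyc ▸ hcos]

theorem eq_add_pi_div_two_of_cos_eq_zero (hS : IsPreconnected S) (hθ : ContinuousOn θ S)
    (hx₀ : x₀ ∈ S) (ha : θ x₀ = a)
    (hQ : ∀ x ∈ S, 0 ≤ cos (θ x - a) ∧ 0 ≤ sin (θ x - a)) {x : X} (hx : x ∈ S)
    (hcos : cos (θ x - a) = 0) : θ x = a + π / 2 := by
  have hπ := pi_pos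
  have hmem := hS.mem_Icc_of_cos_sin_nonneg hθ hx₀ ha hQ hx
  have : θ x - a = π / 2 :=
    injOn_cos ⟨by linarith [hmem.1], by linarith [hmem.2]⟩ ⟨by linarith, by linarith⟩
      (hcos.trans cos_pi_div_two.symm)
  linarith

end IsPreconnected

theorem exists_continuous_arg {X : Type*} [TopologicalSpace X] [SimplyConnectedSpace X]
    [LocallyPathConnectedSpace X] {H : X → ℂ} (hH : Continuous H) (hne : ∀ x, H x ≠ 0) (x₀ : X) :
    ∃ θ : X → ℝ, Continuous θ ∧ θ x₀ = (H x₀).arg ∧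
      ∀ x, cos (θ x) = (H x).re / ‖H x‖ ∧ sin (θ x) = (H x).im / ‖H x‖ := by
  obtain ⟨L, ⟨hL₀, hL⟩, -⟩ := Complex.isCoveringMapOn_exp.existsUnique_continuousMap_lifts
    ⟨H, hH⟩ (Complex.exp_log (hne x₀)) hne
  have hexp : ∀ x, H x = Complex.exp (L x) := fun x => (congrFun hL x).symm
  refine ⟨fun x => (L x).im, Complex.continuous_im.comp L.continuous,
    by simp [hL₀, Complex.log_im], fun x => ?_⟩
  simp only [hexp, Complex.norm_exp, Complex.exp_re, Complex.exp_im]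
  constructor <;> field_simp

theorem exists_continuous_arg_on_square {H : ℝ × ℝ → ℂ}
    (hH : ContinuousOn H (Icc 0 1 ×ˢ Icc 0 1)) (hne : ∀ p ∈ Icc (0:ℝ) 1 ×ˢ Icc (0:ℝ) 1, H p ≠ 0) :
    ∃ θ : ℝ × ℝ → ℝ, Continuous θ ∧ θ (0, 0) = (H (0, 0)).arg ∧
      ∀ s ∈ Icc (0:ℝ) 1, ∀ t ∈ Icc (0:ℝ) 1,
        cos (θ (s, t)) = (H (s, t)).re / ‖H (s, t)‖ ∧
          sin (θ (s, t)) = (H (s, t)).im / ‖H (s, t)‖ := by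
  let r (p : ℝ × ℝ) : ℝ × ℝ := (projIcc 0 1 zero_le_one p.1, projIcc 0 1 zero_le_one p.2)
  have hr_mem (p : ℝ × ℝ) : r p ∈ Icc (0:ℝ) 1 ×ˢ Icc (0:ℝ) 1 := ⟨Subtype.prop _, Subtype.prop _⟩
  have hr_eq (s t : ℝ) (hs : s ∈ Icc (0:ℝ) 1) (ht : t ∈ Icc (0:ℝ) 1) : r (s, t) = (s, t) := by
    simp [r, projIcc_of_mem _ hs, projIcc_of_mem _ ht]
  obtain ⟨θ, hθ, hθ₀, hθH⟩ := exists_continuous_arg (hH.comp_continuous (by fun_prop) hr_mem)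
    (fun p => hne _ (hr_mem p)) (0, 0)
  have h0 : (0:ℝ) ∈ Icc (0:ℝ) 1 := left_mem_Icc.2 zero_le_one
  refine ⟨θ, hθ, by simpa [hr_eq 0 0 h0 h0] using hθ₀, fun s hs t ht => ?_⟩
  simpa [hr_eq s t hs ht] using hθH (s, t)

theorem exists_zero_of_quadrant_edges {H : ℝ × ℝ → ℂ}
    (hH : ContinuousOn H (Icc 0 1 ×ˢ Icc 0 1))
    (hbot : ∀ s ∈ Icc (0:ℝ) 1, 0 ≤ (H (s, 0)).re ∧ (H (s, 0)).im ≤ 0)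
    (hright : ∀ t ∈ Icc (0:ℝ) 1, 0 ≤ (H (1, t)).re ∧ 0 ≤ (H (1, t)).im)
    (htop : ∀ s ∈ Icc (0:ℝ) 1, (H (s, 1)).re ≤ 0 ∧ 0 ≤ (H (s, 1)).im)
    (hleft : ∀ t ∈ Icc (0:ℝ) 1, (H (0, t)).re ≤ 0 ∧ (H (0, t)).im ≤ 0) :
    ∃ p ∈ Icc (0:ℝ) 1 ×ˢ Icc (0:ℝ) 1, H p = 0 := by
  by_contra! hne
  have h0 : (0:ℝ) ∈ Icc (0:ℝ) 1 := left_mem_Icc.2 zero_le_one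
  have h1 : (1:ℝ) ∈ Icc (0:ℝ) 1 := right_mem_Icc.2 zero_le_one
  obtain ⟨θ, hθ, hθ₀, hθH⟩ := exists_continuous_arg_on_square hH hne
  have hre00 : (H (0, 0)).re = 0 := le_antisymm (hleft 0 h0).1 (hbot 0 h0).1
  replace hθ₀ : θ (0, 0) = -(π / 2) := by
    rw [hθ₀, Complex.arg_eq_neg_pi_div_two_iff]
    exact ⟨hre00, (hbot 0 h0).2.lt_of_ne fun him => hne _ ⟨h0, h0⟩ (Complex.ext hre00 him)⟩
  have hθ₁₀ : θ (1, 0) = 0 := by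
    have := isPreconnected_Icc.eq_add_pi_div_two_of_cos_eq_zero (θ := fun s => θ (s, 0))
      (by fun_prop) h0 hθ₀ (fun s hs => ?_) h1 ?_
    · simpa using this
    · simp only [sub_neg_eq_add, cos_add_pi_div_two, sin_add_pi_div_two, neg_nonneg,
        (hθH s hs 0 h0).1, (hθH s hs 0 h0).2]
      exact ⟨div_nonpos_of_nonpos_of_nonneg (hbot s hs).2 (norm_nonneg _),
        div_nonneg (hbot s hs).1 (norm_nonneg _)⟩
    · simp [cos_add_pi_div_two, (hθH 1 h1 0 h0).2, le_antisymm (hbot 1 h1).2 (hright 0 h0).2]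
  have hθ₁₁ : θ (1, 1) = π / 2 := by
    have := isPreconnected_Icc.eq_add_pi_div_two_of_cos_eq_zero (θ := fun t => θ (1, t))
      (by fun_prop) h0 hθ₁₀ (fun t ht => ?_) h1 ?_
    · simpa using this
    · simp only [sub_zero, (hθH 1 h1 t ht).1, (hθH 1 h1 t ht).2]
      exact ⟨div_nonneg (hright t ht).1 (norm_nonneg _),
        div_nonneg (hright t ht).2 (norm_nonneg _)⟩
    · simp [(hθH 1 h1 1 h1).1, le_antisymm (htop 1 h1).1 (hright 1 h1).1]
  have hθ₀₁ : θ (0, 1) = π := by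
    have := isPreconnected_Icc.eq_add_pi_div_two_of_cos_eq_zero (θ := fun s => θ (s, 1))
      (by fun_prop) h1 hθ₁₁ (fun s hs => ?_) h0 ?_
    · linarith
    · simp only [cos_sub_pi_div_two, sin_sub_pi_div_two, neg_nonneg,
        (hθH s hs 1 h1).1, (hθH s hs 1 h1).2]
      exact ⟨div_nonneg (htop s hs).2 (norm_nonneg _),
        div_nonpos_of_nonpos_of_nonneg (htop s hs).1 (norm_nonneg _)⟩
    · simp [cos_sub_pi_div_two, (hθH 0 h0 1 h1).2, le_antisymm (hleft 1 h1).2 (htop 0 h0).2]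
  have hθ₀₀ : θ (0, 0) = π + π / 2 := by
    refine isPreconnected_Icc.eq_add_pi_div_two_of_cos_eq_zero (θ := fun t => θ (0, t))
      (by fun_prop) h1 hθ₀₁ (fun t ht => ?_) h0 ?_
    · simp only [cos_sub_pi, sin_sub_pi, neg_nonneg, (hθH 0 h0 t ht).1, (hθH 0 h0 t ht).2]
      exact ⟨div_nonpos_of_nonpos_of_nonneg (hleft t ht).1 (norm_nonneg _),
        div_nonpos_of_nonpos_of_nonneg (hleft t ht).2 (norm_nonneg _)⟩
    · simp [cos_sub_pi, (hθH 0 h0 0 h0).1, hre00]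
  linarith [pi_pos]

/-- Two paths in the unit square joining opposite pairs of corners intersect. -/
theorem curves_intersect (f g : ℝ → E2)
    (hfc : ContinuousOn f (Icc 0 1)) (hgc : ContinuousOn g (Icc 0 1))
    (hfm : MapsTo f (Icc 0 1) unitSq) (hgm : MapsTo g (Icc 0 1) unitSq)
    (hf0 : f 0 = pt 0 0) (hf1 : f 1 = pt 1 1)
    (hg0 : g 0 = pt 0 1) (hg1 : g 1 = pt 1 0) :
    ∃ s ∈ Icc (0:ℝ) 1, ∃ t ∈ Icc (0:ℝ) 1, f s = g t := by
  let e : E2 ≃ₗᵢ[ℝ] ℂ := Complex.orthonormalBasisOneI.repr.symm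
  have he (v : E2) : (e v).re = v 0 ∧ (e v).im = v 1 := by
    simp [e, Complex.orthonormalBasisOneI_repr_symm_apply]
  obtain ⟨⟨s, t⟩, ⟨hs, ht⟩, hst⟩ :
      ∃ p ∈ Icc (0:ℝ) 1 ×ˢ Icc (0:ℝ) 1, e (f p.1 - g p.2) = 0 := by
    refine exists_zero_of_quadrant_edges (e.continuous.comp_continuousOn <|
      (hfc.comp continuousOn_fst fun _ hp => hp.1).sub (hgc.comp continuousOn_snd fun _ hp => hp.2))
      ?_ ?_ ?_ ?_ <;> intro x hx <;>
      obtain ⟨⟨_, _⟩, _, _⟩ := hfm hx <;> obtain ⟨⟨_, _⟩, _, _⟩ := hgm hx <;>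
      simp only [hf0, hf1, hg0, hg1, pt, map_sub, Complex.sub_re, Complex.sub_im, he,
        Matrix.cons_val_zero, Matrix.cons_val_one, Matrix.cons_val_fin_one] <;>
      constructor <;> linarith
  exact ⟨s, hs, t, ht, sub_eq_zero.1 (e.map_eq_zero_iff.1 hst)⟩
end
end

section
/- Let f, g : [0,1] → [0,1]² be continuous functions such that f(0) = (0,0), f(1) = (1,1), g(0) = (0,1), g(1) = (1,0), and such that f(t) ∈ (0,1)² and g(t) ∈ (0,1)² for every t with 0 < t < 1. Then there exist s, t ∈ (0,1) with f(s) = g(t), and this common point lies in the open unit square (0,1)². -/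
/-!
If the paths `F` (from `0` to `1 + i`) and `G` (from `i` to `1`) never met, `(s, t) ↦ F s - G t`
would be a nonvanishing map on the square, hence have a continuous logarithm `Λ`. On each side of
the square, multiplying by a suitable power of `i` puts `F s - G t` in the closed right half-plane,
where the principal logarithm is continuous, and moves it from `1` to `i`; so `Im Λ` increases by
`π / 2` along each side, i.e. by `2π` around the boundary, which is absurd for a function on the
square.
-/

open Set

noncomputable section

namespace Complex

theorem mem_slitPlane_of_re_nonneg {z : ℂ} (hz : z ≠ 0) (hre : 0 ≤ z.re) :
    z ∈ slitPlane := by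
  rw [mem_slitPlane_iff]
  by_contra! h
  exact hz (ext (le_antisymm h.1 hre) h.2)

theorem sub_eq_log_exp_sub_log_exp {A : Type*} [TopologicalSpace A] [PreconnectedSpace A]
    {Λ : A → ℂ} (hΛ : Continuous Λ) (hslit : ∀ x, exp (Λ x) ∈ slitPlane) (a b : A) :
    Λ a - Λ b = log (exp (Λ a)) - log (exp (Λ b)) := by
  have hlog : Continuous fun x => log (exp (Λ x)) :=
    continuous_iff_continuousAt.2 fun x =>
      (continuousAt_clog (hslit x)).comp (f := fun x => exp (Λ x)) (by fun_prop)
  have key := isCoveringMap_exp.eq_of_comp_eq (g₁ := fun x => Λ x - Λ b + log (exp (Λ b)))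
    (g₂ := fun x => log (exp (Λ x))) (by fun_prop) hlog
    (funext fun x => Subtype.ext <| by
      simp [exp_sub, exp_add, exp_log (slitPlane_ne_zero (hslit _))])
    b (by simp)
  linear_combination congrFun key a

theorem im_sub_eq_pi_div_two {A : Type*} [TopologicalSpace A] [PreconnectedSpace A]
    {Λ : A → ℂ} (hΛ : Continuous Λ) {c : ℂ} (hre : ∀ x, 0 ≤ (c * exp (Λ x)).re)
    {a b : A} (ha : c * exp (Λ a) = 1) (hb : c * exp (Λ b) = I) :
    (Λ b - Λ a).im = Real.pi / 2 := by
  have hc : c ≠ 0 := left_ne_zero_of_mul_eq_one ha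
  have hshift : ∀ x, exp (Λ x + log c) = c * exp (Λ x) := fun x => by
    rw [exp_add, exp_log hc, mul_comm]
  have hslit : ∀ x, exp (Λ x + log c) ∈ slitPlane := fun x =>
    hshift x ▸ mem_slitPlane_of_re_nonneg (mul_ne_zero hc (exp_ne_zero _)) (hre x)
  have := sub_eq_log_exp_sub_log_exp (Λ := fun x => Λ x + log c) (by fun_prop) hslit b a
  simp only [hshift, ha, hb, log_one, log_I, add_sub_add_right_eq_sub] at this
  simp [this]

end Complex

open Complex in
theorem Path.exists_eq_of_im_mem_of_re_mem (F : Path (0 : ℂ) (1 + I)) (G : Path I 1)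
    (hF : ∀ s, (F s).im ∈ Icc 0 1) (hG : ∀ t, (G t).re ∈ Icc 0 1) : ∃ s t, F s = G t := by
  by_contra! hne
  -- Extended to `ℝ × ℝ`, whose simple connectedness is available as an instance.
  let D : C(ℝ × ℝ, ℂ) := ⟨fun p => F.extend p.1 - G.extend p.2, by fun_prop⟩
  have hD : ∀ p, D p ≠ 0 := fun p => sub_ne_zero.2 (hne _ _)
  obtain ⟨Λ, -, hΛ⟩ := (isCoveringMapOn_exp.existsUnique_continuousMap_lifts D (a₀ := 0)
    (exp_log (hD 0)) hD).exists
  have hexp : ∀ x y, exp (Λ (x, y)) = F.extend x - G.extend y := fun x y => congrFun hΛ (x, y)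
  have hFim : ∀ x, (F.extend x).im ∈ Icc 0 1 := fun x => hF _
  have hGre : ∀ y, (G.extend y).re ∈ Icc 0 1 := fun y => hG _
  have bottom := im_sub_eq_pi_div_two (Λ := fun x => Λ (x, 0)) (by fun_prop) (c := I)
    (fun x => by simp [hexp]; linarith [(hFim x).2])
    (a := 0) (b := 1) (by simp [hexp]) (by simp [hexp])
  have right := im_sub_eq_pi_div_two (Λ := fun y => Λ (1, y)) (by fun_prop) (c := 1)
    (fun y => by simp [hexp]; linarith [(hGre y).2])
    (a := 0) (b := 1) (by simp [hexp]) (by simp [hexp])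
  have top := im_sub_eq_pi_div_two (Λ := fun x => Λ (x, 1)) (by fun_prop) (c := -I)
    (fun x => by simp [hexp]; linarith [(hFim x).1])
    (a := 1) (b := 0) (by simp [hexp]) (by simp [hexp])
  have left := im_sub_eq_pi_div_two (Λ := fun y => Λ (0, y)) (by fun_prop) (c := -1)
    (fun y => by simp [hexp]; linarith [(hGre y).1])
    (a := 1) (b := 0) (by simp [hexp]) (by simp [hexp])
  simp only [sub_im] at bottom right top left
  linarith [Real.pi_pos]

theorem Set.mem_Ioo_of_apply_mem {α : Type*} {h : ℝ → α} {S : Set α} (h0 : h 0 ∉ S)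
    (h1 : h 1 ∉ S) {s : ℝ} (hs : s ∈ Icc 0 1) (hS : h s ∈ S) : s ∈ Ioo 0 1 := by
  rcases eq_endpoints_or_mem_Ioo_of_mem_Icc hs with rfl | rfl | hs
  exacts [absurd hS h0, absurd hS h1, hs]

theorem pt_notMem_openUnitSq {x : ℝ} (hx : x = 0 ∨ x = 1) (y : ℝ) :
    pt x y ∉ openUnitSq := by
  rcases hx with rfl | rfl <;> simp [pt, openUnitSq]

/-- Two paths in the unit square joining opposite pairs of corners, whose interiors stay
in the open unit square, intersect in the open unit square. -/
theorem curves_intersect_open (f g : ℝ → E2)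
    (hfc : ContinuousOn f (Icc 0 1)) (hgc : ContinuousOn g (Icc 0 1))
    (hfm : MapsTo f (Icc 0 1) unitSq) (hgm : MapsTo g (Icc 0 1) unitSq)
    (hf0 : f 0 = pt 0 0) (hf1 : f 1 = pt 1 1)
    (hg0 : g 0 = pt 0 1) (hg1 : g 1 = pt 1 0)
    (hfo : ∀ t ∈ Ioo (0:ℝ) 1, f t ∈ openUnitSq)
    (hgo : ∀ t ∈ Ioo (0:ℝ) 1, g t ∈ openUnitSq) :
    ∃ s ∈ Ioo (0:ℝ) 1, ∃ t ∈ Ioo (0:ℝ) 1, f s = g t ∧ f s ∈ openUnitSq := by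
  let e := Complex.orthonormalBasisOneI.repr.symm
  let F : Path (0 : ℂ) (1 + Complex.I) :=
    ⟨⟨fun s => e (f s), e.continuous.comp hfc.domRestrict⟩,
      by simp [e, hf0, pt],
      by simp [e, hf1, pt]⟩
  let G : Path Complex.I 1 :=
    ⟨⟨fun t => e (g t), e.continuous.comp hgc.domRestrict⟩,
      by simp [e, hg0, pt],
      by simp [e, hg1, pt]⟩
  obtain ⟨⟨s, hs⟩, ⟨t, ht⟩, hst⟩ := F.exists_eq_of_im_mem_of_re_mem G
    (fun s => by simpa [F, e] using (hfm s.2).2) (fun t => by simpa [G, e] using (hgm t.2).1)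
  have hfg : f s = g t := e.injective hst
  have hopen : f s ∈ openUnitSq := by
    rcases eq_endpoints_or_mem_Ioo_of_mem_Icc hs with rfl | rfl | hs <;>
    rcases eq_endpoints_or_mem_Ioo_of_mem_Icc ht with rfl | rfl | ht
    all_goals first
      | exact hfo _ hs
      | exact hfg ▸ hgo _ ht
      | simp [hf0, hf1, hg0, hg1, pt] at hfg
  have h0 := pt_notMem_openUnitSq (x := 0) (.inl rfl)
  have h1 := pt_notMem_openUnitSq (x := 1) (.inr rfl)
  exact ⟨s, mem_Ioo_of_apply_mem (hf0 ▸ h0 _) (hf1 ▸ h1 _) hs hopen,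
    t, mem_Ioo_of_apply_mem (hg0 ▸ h0 _) (hg1 ▸ h1 _) ht (hfg ▸ hopen), hfg, hopen⟩
end
end

section
/- Let f, g : [0,1] → [0,1]² be continuous with f(0) = (0,0), f(1) = (1,1), g(0) = (0,1), g(1) = (1,0). Define f₁, g₁ : [-1,2] → ℝ² by f₁(t) = f(t) and g₁(t) = g(t) for t ∈ [0,1], and f₁(t) = (t,t), g₁(t) = (t, 1-t) for t ∈ [-1,0) ∪ (1,2]. Define f₂, g₂ : [0,1] → ℝ² by f₂(t) = (f₁(3t-1) + (1,1))/3 and g₂(t) = (g₁(3t-1) + (1,1))/3. Then f₂ and g₂ are continuous, take values in [0,1]², satisfy f₂(0) = (0,0), f₂(1) = (1,1), g₂(0) = (0,1), g₂(1) = (1,0), and for every t with 0 < t < 1 both f₂(t) and g₂(t) lie in the open unit square (0,1)². -/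
/-!
The extensions `f₁, g₁` are continuous because `f` and `g` agree with the diagonal and the
antidiagonal at `0` and `1`. They map `[-1,2]` into `[-1,2]²` and `(-1,2)` into `(-1,2)²`, and the
homothety `p ↦ (p + (1,1))/3`, of ratio `1/3` about the centre of the unit square, carries these
squares into `[0,1]²` and `(0,1)²` respectively.
-/

open Set

noncomputable section

/-- `f₁ : [-1,2] → ℝ²`: extend `f` by the diagonal outside `[0,1]`. -/
def extF (f : ℝ → E2) (t : ℝ) : E2 := if t ∈ Icc (0:ℝ) 1 then f t else pt t t

/-- `g₁ : [-1,2] → ℝ²`: extend `g` by the antidiagonal outside `[0,1]`. -/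
def extG (g : ℝ → E2) (t : ℝ) : E2 := if t ∈ Icc (0:ℝ) 1 then g t else pt t (1 - t)

/-- `f₂(t) = (f₁(3t-1) + (1,1))/3`. -/
def sqF (f : ℝ → E2) (t : ℝ) : E2 := (3:ℝ)⁻¹ • (extF f (3*t - 1) + pt 1 1)

/-- `g₂(t) = (g₁(3t-1) + (1,1))/3`. -/
def sqG (g : ℝ → E2) (t : ℝ) : E2 := (3:ℝ)⁻¹ • (extG g (3*t - 1) + pt 1 1)

@[simp] lemma pt_apply_zero (a b : ℝ) : pt a b 0 = a := rfl

@[simp] lemma pt_apply_one (a b : ℝ) : pt a b 1 = b := rfl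

lemma E2.ext {p q : E2} (h0 : p 0 = q 0) (h1 : p 1 = q 1) : p = q := by
  ext i
  fin_cases i
  exacts [h0, h1]

lemma Continuous.pt {u v : ℝ → ℝ} (hu : Continuous u) (hv : Continuous v) :
    Continuous fun t => pt (u t) (v t) :=
  (PiLp.continuous_toLp 2 _).comp <| continuous_pi fun i => by fin_cases i <;> assumption

def square (I : Set ℝ) : Set E2 := {p | p 0 ∈ I ∧ p 1 ∈ I}

lemma square_mono {I J : Set ℝ} (h : I ⊆ J) : square I ⊆ square J :=
  fun _ hp => ⟨h hp.1, h hp.2⟩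

def shrink (p : E2) : E2 := (3:ℝ)⁻¹ • (p + pt 1 1)

@[simp] lemma shrink_apply (p : E2) (i : Fin 2) : shrink p i = (p i + 1) / 3 := by
  fin_cases i <;> simp [shrink] <;> ring

lemma shrink_pt (a b : ℝ) : shrink (pt a b) = pt ((a + 1) / 3) ((b + 1) / 3) :=
  E2.ext (by simp) (by simp)

lemma mapsTo_shrink_Icc : MapsTo shrink (square (Icc (-1) 2)) unitSq := by
  rintro p ⟨⟨h0, h0'⟩, ⟨h1, h1'⟩⟩
  refine ⟨⟨?_, ?_⟩, ⟨?_, ?_⟩⟩ <;> simp only [shrink_apply] <;> linarith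

lemma mapsTo_shrink_Ioo : MapsTo shrink (square (Ioo (-1) 2)) openUnitSq := by
  rintro p ⟨⟨h0, h0'⟩, ⟨h1, h1'⟩⟩
  refine ⟨⟨?_, ?_⟩, ⟨?_, ?_⟩⟩ <;> simp only [shrink_apply] <;> linarith

lemma continuous_piecewise_Icc {X : Type*} [TopologicalSpace X] {a b : ℝ} (hab : a ≤ b)
    {f ℓ : ℝ → X} (hf : ContinuousOn f (Icc a b)) (hℓ : Continuous ℓ)
    (ha : f a = ℓ a) (hb : f b = ℓ b) : Continuous ((Icc a b).piecewise f ℓ) := by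
  refine continuous_piecewise ?_ (by rwa [closure_Icc]) hℓ.continuousOn
  rw [frontier_Icc hab]
  rintro x (rfl | rfl)
  exacts [ha, hb]

lemma mapsTo_piecewise {α β : Type*} {s I : Set α} {T : Set β} [∀ x, Decidable (x ∈ s)]
    {f ℓ : α → β} (hf : MapsTo f (s ∩ I) T) (hℓ : MapsTo ℓ (I \ s) T) :
    MapsTo (s.piecewise f ℓ) I T := by
  intro x hx
  by_cases hs : x ∈ s
  · simpa [hs] using hf ⟨hs, hx⟩
  · simpa [hs] using hℓ ⟨hx, hs⟩

lemma continuous_extF {f : ℝ → E2} (hfc : ContinuousOn f (Icc 0 1))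
    (hf0 : f 0 = pt 0 0) (hf1 : f 1 = pt 1 1) : Continuous (extF f) :=
  continuous_piecewise_Icc zero_le_one hfc (continuous_id.pt continuous_id) hf0 hf1

lemma continuous_extG {g : ℝ → E2} (hgc : ContinuousOn g (Icc 0 1))
    (hg0 : g 0 = pt 0 1) (hg1 : g 1 = pt 1 0) : Continuous (extG g) :=
  continuous_piecewise_Icc zero_le_one hgc (continuous_id.pt (continuous_const.sub continuous_id))
    (by rw [hg0, sub_zero]) (by rw [hg1, sub_self])

lemma mapsTo_extF {f : ℝ → E2} (hfm : MapsTo f (Icc 0 1) unitSq) {I : Set ℝ}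
    (hI : Icc 0 1 ⊆ I) : MapsTo (extF f) I (square I) :=
  mapsTo_piecewise ((hfm.mono_right (square_mono hI)).mono_left inter_subset_left)
    fun _ ht => ⟨ht.1, ht.1⟩

lemma mapsTo_extG {g : ℝ → E2} (hgm : MapsTo g (Icc 0 1) unitSq) {I : Set ℝ}
    (hI : Icc 0 1 ⊆ I) (hI' : MapsTo (1 - ·) I I) : MapsTo (extG g) I (square I) :=
  mapsTo_piecewise ((hgm.mono_right (square_mono hI)).mono_left inter_subset_left)
    fun _ ht => ⟨ht.1, hI' ht.1⟩

lemma continuous_shrink : Continuous shrink := by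
  unfold shrink
  fun_prop

lemma mapsTo_three_mul_sub_one_Icc : MapsTo (fun t : ℝ => 3 * t - 1) (Icc 0 1) (Icc (-1) 2) :=
  fun _ ht => ⟨by linarith [ht.1], by linarith [ht.2]⟩

lemma mapsTo_three_mul_sub_one_Ioo : MapsTo (fun t : ℝ => 3 * t - 1) (Ioo 0 1) (Ioo (-1) 2) :=
  fun _ ht => ⟨by linarith [ht.1], by linarith [ht.2]⟩

lemma sqF_eq (f : ℝ → E2) : sqF f = shrink ∘ extF f ∘ fun t => 3 * t - 1 := rfl

lemma sqG_eq (g : ℝ → E2) : sqG g = shrink ∘ extG g ∘ fun t => 3 * t - 1 := rfl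

lemma continuous_sqF {f : ℝ → E2} (hfc : ContinuousOn f (Icc 0 1))
    (hf0 : f 0 = pt 0 0) (hf1 : f 1 = pt 1 1) : Continuous (sqF f) :=
  continuous_shrink.comp <| (continuous_extF hfc hf0 hf1).comp <| by fun_prop

lemma continuous_sqG {g : ℝ → E2} (hgc : ContinuousOn g (Icc 0 1))
    (hg0 : g 0 = pt 0 1) (hg1 : g 1 = pt 1 0) : Continuous (sqG g) :=
  continuous_shrink.comp <| (continuous_extG hgc hg0 hg1).comp <| by fun_prop

lemma mapsTo_sqF_Icc {f : ℝ → E2} (hfm : MapsTo f (Icc 0 1) unitSq) :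
    MapsTo (sqF f) (Icc 0 1) unitSq :=
  mapsTo_shrink_Icc.comp <| (mapsTo_extF hfm (Icc_subset_Icc (by norm_num) (by norm_num))).comp
    mapsTo_three_mul_sub_one_Icc

lemma mapsTo_sqF_Ioo {f : ℝ → E2} (hfm : MapsTo f (Icc 0 1) unitSq) :
    MapsTo (sqF f) (Ioo 0 1) openUnitSq :=
  mapsTo_shrink_Ioo.comp <| (mapsTo_extF hfm (Icc_subset_Ioo (by norm_num) (by norm_num))).comp
    mapsTo_three_mul_sub_one_Ioo

lemma mapsTo_sqG_Icc {g : ℝ → E2} (hgm : MapsTo g (Icc 0 1) unitSq) :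
    MapsTo (sqG g) (Icc 0 1) unitSq :=
  mapsTo_shrink_Icc.comp <| (mapsTo_extG hgm (Icc_subset_Icc (by norm_num) (by norm_num))
    fun _ ht => ⟨by linarith [ht.2], by linarith [ht.1]⟩).comp mapsTo_three_mul_sub_one_Icc

lemma mapsTo_sqG_Ioo {g : ℝ → E2} (hgm : MapsTo g (Icc 0 1) unitSq) :
    MapsTo (sqG g) (Ioo 0 1) openUnitSq :=
  mapsTo_shrink_Ioo.comp <| (mapsTo_extG hgm (Icc_subset_Ioo (by norm_num) (by norm_num))
    fun _ ht => ⟨by linarith [ht.2], by linarith [ht.1]⟩).comp mapsTo_three_mul_sub_one_Ioo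

lemma sqF_zero (f : ℝ → E2) : sqF f 0 = pt 0 0 := by
  norm_num [sqF_eq, extF, shrink_pt]

lemma sqF_one (f : ℝ → E2) : sqF f 1 = pt 1 1 := by
  norm_num [sqF_eq, extF, shrink_pt]

lemma sqG_zero (g : ℝ → E2) : sqG g 0 = pt 0 1 := by
  norm_num [sqG_eq, extG, shrink_pt]

lemma sqG_one (g : ℝ → E2) : sqG g 1 = pt 1 0 := by
  norm_num [sqG_eq, extG, shrink_pt]

/-- The rescaled extensions `f₂, g₂` are continuous paths in the unit square joining
opposite corners, whose interiors lie in the open unit square. -/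
theorem extension_properties (f g : ℝ → E2)
    (hfc : ContinuousOn f (Icc 0 1)) (hgc : ContinuousOn g (Icc 0 1))
    (hfm : MapsTo f (Icc 0 1) unitSq) (hgm : MapsTo g (Icc 0 1) unitSq)
    (hf0 : f 0 = pt 0 0) (hf1 : f 1 = pt 1 1)
    (hg0 : g 0 = pt 0 1) (hg1 : g 1 = pt 1 0) :
    ContinuousOn (sqF f) (Icc 0 1) ∧ ContinuousOn (sqG g) (Icc 0 1) ∧
    MapsTo (sqF f) (Icc 0 1) unitSq ∧ MapsTo (sqG g) (Icc 0 1) unitSq ∧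
    sqF f 0 = pt 0 0 ∧ sqF f 1 = pt 1 1 ∧
    sqG g 0 = pt 0 1 ∧ sqG g 1 = pt 1 0 ∧
    (∀ t ∈ Ioo (0:ℝ) 1, sqF f t ∈ openUnitSq ∧ sqG g t ∈ openUnitSq) :=
  ⟨(continuous_sqF hfc hf0 hf1).continuousOn, (continuous_sqG hgc hg0 hg1).continuousOn,
    mapsTo_sqF_Icc hfm, mapsTo_sqG_Icc hgm, sqF_zero f, sqF_one f, sqG_zero g, sqG_one g,
    fun _ ht => ⟨mapsTo_sqF_Ioo hfm ht, mapsTo_sqG_Ioo hgm ht⟩⟩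
end
end

section
/- Let f, g : [0,1] → [0,1]² be continuous with f(0) = (0,0), f(1) = (1,1), g(0) = (0,1), g(1) = (1,0), and let f₂, g₂ : [0,1] → [0,1]² be defined from f, g as in the extension construction. Suppose σ, τ ∈ [0,1] satisfy f₂(σ) = g₂(τ) = x. Then 3σ - 1 ∈ [0,1], 3τ - 1 ∈ [0,1], and f(3σ - 1) = 3x - (1,1) = g(3τ - 1); in particular 3x - (1,1) ∈ range(f) ∩ range(g). -/
open Set

noncomputable section

lemma extF_apply_zero_mem_Icc_iff {f : ℝ → E2} (hf : MapsTo f (Icc 0 1) unitSq) {s : ℝ} :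
    extF f s 0 ∈ Icc (0:ℝ) 1 ↔ s ∈ Icc (0:ℝ) 1 := by
  by_cases hs : s ∈ Icc (0:ℝ) 1
  · simpa [extF, hs] using (hf hs).1
  · simp [extF, hs]

lemma extG_apply_zero_mem_Icc_iff {g : ℝ → E2} (hg : MapsTo g (Icc 0 1) unitSq) {t : ℝ} :
    extG g t 0 ∈ Icc (0:ℝ) 1 ↔ t ∈ Icc (0:ℝ) 1 := by
  by_cases ht : t ∈ Icc (0:ℝ) 1
  · simpa [extG, ht] using (hg ht).1
  · simp [extG, ht]

/-- Outside `[0,1]` the diagonal and the antidiagonal meet only over `1/2 ∈ [0,1]`. -/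
lemma mem_Icc_of_extF_eq_extG {f g : ℝ → E2} (hf : MapsTo f (Icc 0 1) unitSq)
    (hg : MapsTo g (Icc 0 1) unitSq) {s t : ℝ} (h : extF f s = extG g t) :
    s ∈ Icc (0:ℝ) 1 ∧ t ∈ Icc (0:ℝ) 1 := by
  have hst : s ∈ Icc (0:ℝ) 1 ↔ t ∈ Icc (0:ℝ) 1 := by
    rw [← extF_apply_zero_mem_Icc_iff hf, h, extG_apply_zero_mem_Icc_iff hg]
  suffices hs : s ∈ Icc (0:ℝ) 1 from ⟨hs, hst.1 hs⟩
  by_contra hs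
  rw [extF, if_neg hs, extG, if_neg (mt hst.2 hs)] at h
  have h0 : s = t := by simpa using congrArg (· 0) h
  have h1 : s = 1 - t := by simpa using congrArg (· 1) h
  exact hs ⟨by linarith, by linarith⟩

lemma extF_eq_of_sqF_eq {f : ℝ → E2} {σ : ℝ} {x : E2} (h : sqF f σ = x) :
    extF f (3*σ - 1) = (3:ℝ) • x - pt 1 1 :=
  eq_sub_of_add_eq ((inv_smul_eq_iff₀ three_ne_zero).1 h)

lemma extG_eq_of_sqG_eq {g : ℝ → E2} {τ : ℝ} {x : E2} (h : sqG g τ = x) :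
    extG g (3*τ - 1) = (3:ℝ) • x - pt 1 1 :=
  eq_sub_of_add_eq ((inv_smul_eq_iff₀ three_ne_zero).1 h)

theorem pullback_intersection_general (f g : ℝ → E2)
    (hfm : MapsTo f (Icc 0 1) unitSq) (hgm : MapsTo g (Icc 0 1) unitSq)
    (σ τ : ℝ)
    (x : E2) (hx1 : sqF f σ = x) (hx2 : sqG g τ = x) :
    3*σ - 1 ∈ Icc (0:ℝ) 1 ∧ 3*τ - 1 ∈ Icc (0:ℝ) 1 ∧
    f (3*σ - 1) = (3:ℝ) • x - pt 1 1 ∧ g (3*τ - 1) = (3:ℝ) • x - pt 1 1 ∧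
    (3:ℝ) • x - pt 1 1 ∈ f '' Icc (0:ℝ) 1 ∩ g '' Icc (0:ℝ) 1 := by
  have hF := extF_eq_of_sqF_eq hx1
  have hG := extG_eq_of_sqG_eq hx2
  obtain ⟨hs, ht⟩ := mem_Icc_of_extF_eq_extG hfm hgm (hF.trans hG.symm)
  rw [extF, if_pos hs] at hF
  rw [extG, if_pos ht] at hG
  exact ⟨hs, ht, hF, hG, ⟨_, hs, hF⟩, _, ht, hG⟩

/-- A common value of `f₂` and `g₂` yields a common value of `f` and `g`. -/
theorem pullback_intersection (f g : ℝ → E2)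
    (hfc : ContinuousOn f (Icc 0 1)) (hgc : ContinuousOn g (Icc 0 1))
    (hfm : MapsTo f (Icc 0 1) unitSq) (hgm : MapsTo g (Icc 0 1) unitSq)
    (hf0 : f 0 = pt 0 0) (hf1 : f 1 = pt 1 1)
    (hg0 : g 0 = pt 0 1) (hg1 : g 1 = pt 1 0)
    (σ τ : ℝ) (hσ : σ ∈ Icc (0:ℝ) 1) (hτ : τ ∈ Icc (0:ℝ) 1)
    (x : E2) (hx1 : sqF f σ = x) (hx2 : sqG g τ = x) :
    3*σ - 1 ∈ Icc (0:ℝ) 1 ∧ 3*τ - 1 ∈ Icc (0:ℝ) 1 ∧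
    f (3*σ - 1) = (3:ℝ) • x - pt 1 1 ∧ g (3*τ - 1) = (3:ℝ) • x - pt 1 1 ∧
    (3:ℝ) • x - pt 1 1 ∈ f '' Icc (0:ℝ) 1 ∩ g '' Icc (0:ℝ) 1 :=
  pullback_intersection_general f g hfm hgm σ τ x hx1 hx2
end
end

section
/- Let f : [0,1] → [0,1]² be continuous with f(0) = (0,0) and f(1) = (1,1). Let a, r, s ∈ ℚ with 0 < r < s and cl B(f(a), s) ⊆ (0,1)². Then p'_{a,s} ≤ p_{a,s} < p'_{a,r} ≤ p_{a,r} < a < q_{a,r} ≤ q'_{a,r} < q_{a,s} ≤ q'_{a,s}; in particular, with K_{a,t} = [p'_{a,t}, p_{a,t}] and L_{a,t} = [q_{a,t}, q'_{a,t}], the intervals satisfy K_{a,s} < K_{a,r} < L_{a,r} < L_{a,s}, where X < Y means max X < min Y. -/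
open Set

noncomputable section

/-- `p_{a,r} = inf{ b ∈ (0,a) ∩ ℚ : f([b,a]) ⊆ B(f(a),r) }`. -/
def pTime (f : ℝ → E2) (a r : ℝ) : ℝ :=
  sInf {b : ℝ | (∃ q : ℚ, (q:ℝ) = b) ∧ b ∈ Ioo 0 a ∧
    MapsTo f (Icc b a) (Metric.ball (f a) r)}

/-- `q_{a,r} = sup{ b ∈ (a,1) ∩ ℚ : f([a,b]) ⊆ B(f(a),r) }`. -/
def qTime (f : ℝ → E2) (a r : ℝ) : ℝ :=
  sSup {b : ℝ | (∃ q : ℚ, (q:ℝ) = b) ∧ b ∈ Ioo a 1 ∧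
    MapsTo f (Icc a b) (Metric.ball (f a) r)}

/-- `p'_{a,r} = sup{ b ∈ (0,a) ∩ ℚ : f(b) ∉ cl B(f(a),r) }`. -/
def pTime' (f : ℝ → E2) (a r : ℝ) : ℝ :=
  sSup {b : ℝ | (∃ q : ℚ, (q:ℝ) = b) ∧ b ∈ Ioo 0 a ∧
    f b ∉ closure (Metric.ball (f a) r)}

/-- `q'_{a,r} = inf{ b ∈ (a,1) ∩ ℚ : f(b) ∉ cl B(f(a),r) }`. -/
def qTime' (f : ℝ → E2) (a r : ℝ) : ℝ :=
  sInf {b : ℝ | (∃ q : ℚ, (q:ℝ) = b) ∧ b ∈ Ioo a 1 ∧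
    f b ∉ closure (Metric.ball (f a) r)}

/-- `K_{a,r} = [p'_{a,r}, p_{a,r}]`. -/
def Kint (f : ℝ → E2) (a r : ℝ) : Set ℝ := Icc (pTime' f a r) (pTime f a r)

/-- `L_{a,r} = [q_{a,r}, q'_{a,r}]`. -/
def Lint (f : ℝ → E2) (a r : ℝ) : Set ℝ := Icc (qTime f a r) (qTime' f a r)

/-!
The left-hand inequalities are proved directly; the right-hand ones follow by running the same
argument for `t ↦ f (1 - t)` at `1 - a`, which swaps the two sides of `a`.

The heart of the matter is `p_{a,s} < p'_{a,r}`. Put `τ = p'_{a,r}`. By continuity and density of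
`ℚ`, every real point of `[τ, a)` at which `f` leaves `cl B(f(a), r)` would produce a rational one
beyond `τ`; so `f` maps `[τ, a]` into `cl B(f(a), r) ⊆ B(f(a), s)`. Continuity at `τ` extends
this to `[q, a]` for a rational `q < τ`, and then `p_{a,s} ≤ q`. The remaining inequalities only use
continuity at `a` and at the endpoints, where `f 0` and `f 1` lie outside `cl B(f(a), s) ⊆ (0,1)²`.
-/

open Filter Topology Metric

lemma exists_rat_gt_of_eventually_nhdsGT {x : ℝ} {P : ℝ → Prop} (h : ∀ᶠ z in 𝓝[>] x, P z) :
    ∃ q : ℚ, x < q ∧ P q := by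
  obtain ⟨u, hxu, hu⟩ := mem_nhdsGT_iff_exists_Ioo_subset.1 h
  obtain ⟨q, hxq, hqu⟩ := exists_rat_btwn (show x < u from hxu)
  exact ⟨q, hxq, hu ⟨hxq, hqu⟩⟩

lemma exists_rat_forall_Icc_of_eventually_nhdsLE {x l : ℝ} {P : ℝ → Prop} (h : ∀ᶠ z in 𝓝[≤] x, P z)
    (hl : l < x) : ∃ q : ℚ, l < q ∧ (q : ℝ) < x ∧ ∀ z ∈ Icc (q : ℝ) x, P z := by
  obtain ⟨m, hmx, hm⟩ := mem_nhdsLE_iff_exists_Ioc_subset.1 h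
  obtain ⟨q, hq, hqx⟩ := exists_rat_btwn (max_lt hl hmx)
  exact ⟨q, (le_max_left _ _).trans_lt hq, hqx,
    fun z hz => hm ⟨(le_max_right _ _).trans_lt (hq.trans_le hz.1), hz.2⟩⟩

section OneSided

variable {β : Type*} [TopologicalSpace β] {f : ℝ → β} {a b x : ℝ}

lemma ContinuousOn.tendsto_nhdsLE_of_mem_Ioc (hf : ContinuousOn f (Icc a b)) (hx : x ∈ Ioc a b) :
    Tendsto f (𝓝[≤] x) (𝓝 (f x)) :=
  ((hf x (Ioc_subset_Icc_self hx)).mono_of_mem_nhdsWithin (Icc_mem_nhdsLE_of_mem hx)).tendsto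

lemma ContinuousOn.tendsto_nhdsGT_of_mem_Ico (hf : ContinuousOn f (Icc a b)) (hx : x ∈ Ico a b) :
    Tendsto f (𝓝[>] x) (𝓝 (f x)) :=
  ((hf x (Ico_subset_Icc_self hx)).mono_of_mem_nhdsWithin (Icc_mem_nhdsGT_of_mem hx)).tendsto

lemma ContinuousOn.comp_one_sub (hf : ContinuousOn f (Icc 0 1)) :
    ContinuousOn (fun x => f (1 - x)) (Icc 0 1) :=
  hf.comp (by fun_prop) fun x hx => ⟨by linarith [hx.2], by linarith [hx.1]⟩

end OneSided

section ExitTimes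

variable {f : ℝ → E2} {a t : ℝ}

lemma pTime_le {q : ℚ} (hq : (q : ℝ) ∈ Ioo 0 a) (hf : MapsTo f (Icc (q : ℝ) a) (ball (f a) t)) :
    pTime f a t ≤ q :=
  csInf_le ⟨0, fun _ hb => hb.2.1.1.le⟩ ⟨⟨q, rfl⟩, hq, hf⟩

lemma le_pTime' {q : ℚ} (hq : (q : ℝ) ∈ Ioo 0 a) (hf : f q ∉ closure (ball (f a) t)) :
    (q : ℝ) ≤ pTime' f a t :=
  le_csSup ⟨a, fun _ hb => hb.2.1.2.le⟩ ⟨⟨q, rfl⟩, hq, hf⟩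

lemma exists_rat_mapsTo_ball (hfc : ContinuousOn f (Icc 0 1)) (ha : a ∈ Ioo 0 1) (ht : 0 < t) :
    ∃ q : ℚ, (q : ℝ) ∈ Ioo 0 a ∧ MapsTo f (Icc (q : ℝ) a) (ball (f a) t) := by
  have hnear : ∀ᶠ z in 𝓝[≤] a, f z ∈ ball (f a) t :=
    (hfc.tendsto_nhdsLE_of_mem_Ioc ⟨ha.1, ha.2.le⟩).eventually (ball_mem_nhds _ ht)
  obtain ⟨q, hq0, hqa, hq⟩ := exists_rat_forall_Icc_of_eventually_nhdsLE hnear ha.1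
  exact ⟨q, ⟨hq0, hqa⟩, hq⟩

lemma pTime_lt (hfc : ContinuousOn f (Icc 0 1)) (ha : a ∈ Ioo 0 1) (ht : 0 < t) :
    pTime f a t < a := by
  obtain ⟨q, hq, hf⟩ := exists_rat_mapsTo_ball hfc ha ht
  exact (pTime_le hq hf).trans_lt hq.2

lemma pTime'_le_pTime (hfc : ContinuousOn f (Icc 0 1)) (ha : a ∈ Ioo 0 1) (ht : 0 < t) :
    pTime' f a t ≤ pTime f a t := by
  obtain ⟨q, hq, hf⟩ := exists_rat_mapsTo_ball hfc ha ht
  refine Real.sSup_le (fun b hb => le_csInf ⟨q, ⟨q, rfl⟩, hq, hf⟩ fun c hc => ?_)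
    (Real.sInf_nonneg fun c hc => hc.2.1.1.le)
  by_contra! hcb
  exact hb.2.2 (subset_closure (hc.2.2 ⟨hcb.le, hb.2.1.2.le⟩))

lemma exists_rat_gt_notMem_closure_ball (hfc : ContinuousOn f (Icc 0 1)) (ha : a ≤ 1) {x : ℝ}
    (hx : x ∈ Ico 0 a) (hfx : f x ∉ closure (ball (f a) t)) :
    ∃ q : ℚ, x < q ∧ (q : ℝ) < a ∧ f q ∉ closure (ball (f a) t) := by
  have hlt : ∀ᶠ z in 𝓝[>] x, z < a := mem_of_superset (Ioo_mem_nhdsGT hx.2) fun _ hz => hz.2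
  have hnear : ∀ᶠ z in 𝓝[>] x, z < a ∧ f z ∉ closure (ball (f a) t) :=
    hlt.and ((hfc.tendsto_nhdsGT_of_mem_Ico ⟨hx.1, hx.2.trans_le ha⟩).eventually
        (isClosed_closure.isOpen_compl.mem_nhds hfx))
  exact exists_rat_gt_of_eventually_nhdsGT hnear

lemma lt_pTime' (hfc : ContinuousOn f (Icc 0 1)) (ha : a ≤ 1) {x : ℝ} (hx : x ∈ Ico 0 a)
    (hfx : f x ∉ closure (ball (f a) t)) : x < pTime' f a t := by
  obtain ⟨q, hxq, hqa, hq⟩ := exists_rat_gt_notMem_closure_ball hfc ha hx hfx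
  exact hxq.trans_le (le_pTime' ⟨hx.1.trans_lt hxq, hqa⟩ hq)

lemma mapsTo_Icc_pTime' (hfc : ContinuousOn f (Icc 0 1)) (ha : a ≤ 1) (ht : 0 < t) :
    MapsTo f (Icc (pTime' f a t) a) (closure (ball (f a) t)) := by
  intro x hx
  rcases hx.2.eq_or_lt with rfl | hxa
  · exact subset_closure (mem_ball_self ht)
  by_contra hfx
  have hx0 : 0 ≤ x := (Real.sSup_nonneg fun b hb => hb.2.1.1.le).trans hx.1
  exact (lt_pTime' hfc ha ⟨hx0, hxa⟩ hfx).not_ge hx.1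

lemma pTime_lt_pTime' {r s : ℝ} (hfc : ContinuousOn f (Icc 0 1)) (ha : a ∈ Ioo 0 1) (hr : 0 < r)
    (hrs : r < s) (h0 : f 0 ∉ closure (ball (f a) r)) : pTime f a s < pTime' f a r := by
  set τ := pTime' f a r
  have hτ0 : 0 < τ := lt_pTime' hfc ha.2.le ⟨le_rfl, ha.1⟩ h0
  have hτa : τ < a := (pTime'_le_pTime hfc ha hr).trans_lt (pTime_lt hfc ha hr)
  have hτ : MapsTo f (Icc τ a) (ball (f a) s) := (mapsTo_Icc_pTime' hfc ha.2.le hr).mono_right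
    (closure_ball_subset_closedBall.trans (closedBall_subset_ball hrs))
  have hnear : ∀ᶠ z in 𝓝[≤] τ, f z ∈ ball (f a) s :=
    (hfc.tendsto_nhdsLE_of_mem_Ioc ⟨hτ0, (hτa.trans ha.2).le⟩).eventually
      (isOpen_ball.mem_nhds (hτ ⟨le_rfl, hτa.le⟩))
  obtain ⟨q, hq0, hqτ, hq⟩ := exists_rat_forall_Icc_of_eventually_nhdsLE hnear hτ0
  refine (pTime_le ⟨hq0, hqτ.trans hτa⟩ fun z hz => ?_).trans_lt hqτ
  rcases le_total z τ with hzτ | hτz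
  exacts [hq z ⟨hz.1, hzτ⟩, hτ ⟨hτz, hz.2⟩]

end ExitTimes

section Reflection

lemma exists_rat_eq_one_sub_iff {b : ℝ} : (∃ q : ℚ, (q : ℝ) = 1 - b) ↔ ∃ q : ℚ, (q : ℝ) = b :=
  ⟨fun ⟨q, hq⟩ => ⟨1 - q, by push_cast; linarith⟩, fun ⟨q, hq⟩ => ⟨1 - q, by push_cast; linarith⟩⟩

lemma setOf_rat_Ioo_eq_image_one_sub {a : ℝ} {P Q : ℝ → Prop} (hPQ : ∀ b, P b ↔ Q (1 - b)) :
    {b : ℝ | (∃ q : ℚ, (q : ℝ) = b) ∧ b ∈ Ioo a 1 ∧ P b} =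
      (fun x => 1 - x) '' {b : ℝ | (∃ q : ℚ, (q : ℝ) = b) ∧ b ∈ Ioo 0 (1 - a) ∧ Q b} := by
  rw [Function.Involutive.image_eq_preimage_symm fun x => sub_sub_cancel 1 x]
  ext b
  simp only [mem_ofPred_eq, mem_preimage, exists_rat_eq_one_sub_iff, mem_Ioo, hPQ b]
  constructor <;> rintro ⟨hq, ⟨h1, h2⟩, hQ⟩ <;> exact ⟨hq, ⟨by linarith, by linarith⟩, hQ⟩

lemma sSup_rat_Ioo_eq_one_sub_sInf {a : ℝ} {P Q : ℝ → Prop} (hPQ : ∀ b, P b ↔ Q (1 - b))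
    (hne : ∃ q : ℚ, (q : ℝ) ∈ Ioo 0 (1 - a) ∧ Q q) :
    sSup {b : ℝ | (∃ q : ℚ, (q : ℝ) = b) ∧ b ∈ Ioo a 1 ∧ P b} =
      1 - sInf {b : ℝ | (∃ q : ℚ, (q : ℝ) = b) ∧ b ∈ Ioo 0 (1 - a) ∧ Q b} := by
  obtain ⟨q, hq, hQ⟩ := hne
  rw [setOf_rat_Ioo_eq_image_one_sub hPQ]
  refine (antitone_const_tsub.map_csInf_of_continuousAt (by fun_prop) ?_ ?_).symm
  exacts [⟨q, ⟨q, rfl⟩, hq, hQ⟩, ⟨0, fun _ hb => hb.2.1.1.le⟩]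

lemma sInf_rat_Ioo_eq_one_sub_sSup {a : ℝ} {P Q : ℝ → Prop} (hPQ : ∀ b, P b ↔ Q (1 - b))
    (hne : ∃ q : ℚ, (q : ℝ) ∈ Ioo 0 (1 - a) ∧ Q q) :
    sInf {b : ℝ | (∃ q : ℚ, (q : ℝ) = b) ∧ b ∈ Ioo a 1 ∧ P b} =
      1 - sSup {b : ℝ | (∃ q : ℚ, (q : ℝ) = b) ∧ b ∈ Ioo 0 (1 - a) ∧ Q b} := by
  obtain ⟨q, hq, hQ⟩ := hne
  rw [setOf_rat_Ioo_eq_image_one_sub hPQ]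
  refine (antitone_const_tsub.map_csSup_of_continuousAt (by fun_prop) ?_ ?_).symm
  exacts [⟨q, ⟨q, rfl⟩, hq, hQ⟩, ⟨1 - a, fun _ hb => hb.2.1.2.le⟩]

variable {f : ℝ → E2} {a t : ℝ}

lemma qTime_eq_one_sub_pTime (hfc : ContinuousOn f (Icc 0 1)) (ha : a ∈ Ioo 0 1) (ht : 0 < t) :
    qTime f a t = 1 - pTime (fun x => f (1 - x)) (1 - a) t := by
  refine sSup_rat_Ioo_eq_one_sub_sInf (fun b => ?_) ?_
  · beta_reduce
    rw [sub_sub_cancel, show (fun x => f (1 - x)) = f ∘ (fun x => 1 - x) from rfl,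
      ← mapsTo_image_iff, image_const_sub_Icc, sub_sub_cancel, sub_sub_cancel]
  · simpa using exists_rat_mapsTo_ball hfc.comp_one_sub (Ioo.one_sub_mem ha) ht

lemma qTime'_eq_one_sub_pTime' (hfc : ContinuousOn f (Icc 0 1)) (ha : a ∈ Ioo 0 1)
    (h1 : f 1 ∉ closure (ball (f a) t)) :
    qTime' f a t = 1 - pTime' (fun x => f (1 - x)) (1 - a) t := by
  refine sInf_rat_Ioo_eq_one_sub_sSup (fun b => ?_) ?_
  · simp only [sub_sub_cancel]
  · obtain ⟨q, hq0, hqa, hq⟩ := exists_rat_gt_notMem_closure_ball hfc.comp_one_sub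
      (Ioo.one_sub_mem ha).2.le ⟨le_rfl, (Ioo.one_sub_mem ha).1⟩ (by simpa using h1)
    exact ⟨q, ⟨hq0, hqa⟩, hq⟩

lemma lt_qTime (hfc : ContinuousOn f (Icc 0 1)) (ha : a ∈ Ioo 0 1) (ht : 0 < t) :
    a < qTime f a t := by
  have := pTime_lt hfc.comp_one_sub (Ioo.one_sub_mem ha) ht
  rw [qTime_eq_one_sub_pTime hfc ha ht]
  linarith

lemma qTime_le_qTime' (hfc : ContinuousOn f (Icc 0 1)) (ha : a ∈ Ioo 0 1) (ht : 0 < t)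
    (h1 : f 1 ∉ closure (ball (f a) t)) : qTime f a t ≤ qTime' f a t := by
  have := pTime'_le_pTime hfc.comp_one_sub (Ioo.one_sub_mem ha) ht
  rw [qTime_eq_one_sub_pTime hfc ha ht, qTime'_eq_one_sub_pTime' hfc ha h1]
  linarith

lemma qTime'_lt_qTime {r s : ℝ} (hfc : ContinuousOn f (Icc 0 1)) (ha : a ∈ Ioo 0 1) (hr : 0 < r)
    (hrs : r < s) (h1 : f 1 ∉ closure (ball (f a) r)) : qTime' f a r < qTime f a s := by
  have := pTime_lt_pTime' hfc.comp_one_sub (Ioo.one_sub_mem ha) hr hrs (by simpa using h1)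
  rw [qTime_eq_one_sub_pTime hfc ha (hr.trans hrs), qTime'_eq_one_sub_pTime' hfc ha h1]
  linarith

end Reflection

theorem exit_intervals_nested_general (f : ℝ → E2)
    (hfc : ContinuousOn f (Icc 0 1))
    (hf0 : f 0 = pt 0 0) (hf1 : f 1 = pt 1 1)
    (a r s : ℚ) (ha : (a:ℝ) ∈ Ioo (0:ℝ) 1) (hr : (0:ℝ) < r) (hrs : (r:ℝ) < s)
    (hball : closure (Metric.ball (f a) s) ⊆ openUnitSq) :
    pTime' f a s ≤ pTime f a s ∧ pTime f a s < pTime' f a r ∧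
    pTime' f a r ≤ pTime f a r ∧ pTime f a r < a ∧
    (a:ℝ) < qTime f a r ∧ qTime f a r ≤ qTime' f a r ∧
    qTime' f a r < qTime f a s ∧ qTime f a s ≤ qTime' f a s := by
  have hs : (0:ℝ) < s := hr.trans hrs
  have hrs' : closure (ball (f a) r) ⊆ closure (ball (f a) s) :=
    closure_mono (ball_subset_ball hrs.le)
  have h0s : f 0 ∉ closure (ball (f a) s) := fun h => by simpa [hf0, pt, openUnitSq] using hball h
  have h1s : f 1 ∉ closure (ball (f a) s) := fun h => by simpa [hf1, pt, openUnitSq] using hball h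
  have h0r : f 0 ∉ closure (ball (f a) r) := fun h => h0s (hrs' h)
  have h1r : f 1 ∉ closure (ball (f a) r) := fun h => h1s (hrs' h)
  exact ⟨pTime'_le_pTime hfc ha hs, pTime_lt_pTime' hfc ha hr hrs h0r, pTime'_le_pTime hfc ha hr,
    pTime_lt hfc ha hr, lt_qTime hfc ha hr, qTime_le_qTime' hfc ha hr h1r,
    qTime'_lt_qTime hfc ha hr hrs h1r, qTime_le_qTime' hfc ha hs h1s⟩

/-- For radii `r < s`, the exit intervals are nested: `K_{a,s} < K_{a,r} < L_{a,r} < L_{a,s}`. -/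
theorem exit_intervals_nested (f : ℝ → E2)
    (hfc : ContinuousOn f (Icc 0 1)) (hfm : MapsTo f (Icc 0 1) unitSq)
    (hf0 : f 0 = pt 0 0) (hf1 : f 1 = pt 1 1)
    (a r s : ℚ) (ha : (a:ℝ) ∈ Ioo (0:ℝ) 1) (hr : (0:ℝ) < r) (hrs : (r:ℝ) < s)
    (hball : closure (Metric.ball (f a) s) ⊆ openUnitSq) :
    pTime' f a s ≤ pTime f a s ∧ pTime f a s < pTime' f a r ∧
    pTime' f a r ≤ pTime f a r ∧ pTime f a r < a ∧
    (a:ℝ) < qTime f a r ∧ qTime f a r ≤ qTime' f a r ∧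
    qTime' f a r < qTime f a s ∧ qTime f a s ≤ qTime' f a s :=
  exit_intervals_nested_general f hfc hf0 hf1 a r s ha hr hrs hball
end
end

section
/- Let f : [0,1] → [0,1]² be continuous with f(0) = (0,0) and f(1) = (1,1). Let a, r, s ∈ ℚ with 0 < r < s and cl B(f(a), s) ⊆ (0,1)², and let (r_n) and (s_n) be sequences of rationals with r < r₀ < r₁ < r₂ < ⋯ < s₂ < s₁ < s₀ < s. Let (J_n) be a sequence of intervals with rational endpoints such that L_{a,r_n} ∪ L_{a,s_n} ⊆ J_n and length(J_n) < 2^{-n} for all n. Then: (i) for all m < n, L_{a,r_n} ∪ L_{a,s_n} ⊆ J_m; (ii) each T_n := ⋂_{m ≤ n} cl J_m is a nonempty closed interval containing L_{a,r_n} ∪ L_{a,s_n} with length(T_n) < 2^{-n}; (iii) ⋂_n T_n is a singleton {β}, and β = lim_n q_{a,r_n}. -/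
open Set

noncomputable section

open Filter Topology

/-! Both exit times `q_{a,ρ}` and `q'_{a,ρ}` increase with `ρ`, and `q_{a,ρ} ≤ q'_{a,ρ'}` for
`ρ ≤ ρ'`. So the intervals `[q_{a,r_n}, q'_{a,s_n}]` are nested, contain `L_{a,r_n} ∪ L_{a,s_n}` and
have both endpoints in it; hence they lie in every earlier `J_m`, and `β = sup_n q_{a,r_n}` lies in
all `J_m` (nested intervals). It is their only common point since the lengths of the `J_m` tend to
zero. -/

section ExitTimes

variable {f : ℝ → E2} {a r r' b b' : ℝ}

def qSet (f : ℝ → E2) (a r : ℝ) : Set ℝ :=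
  {b : ℝ | (∃ q : ℚ, (q:ℝ) = b) ∧ b ∈ Ioo a 1 ∧
    MapsTo f (Icc a b) (Metric.ball (f a) r)}

def qSet' (f : ℝ → E2) (a r : ℝ) : Set ℝ :=
  {b : ℝ | (∃ q : ℚ, (q:ℝ) = b) ∧ b ∈ Ioo a 1 ∧ f b ∉ closure (Metric.ball (f a) r)}

lemma qSet_nonempty (hfc : ContinuousWithinAt f (Icc 0 1) a) (ha : a ∈ Ioo (0:ℝ) 1)
    (hr : 0 < r) : (qSet f a r).Nonempty := by
  obtain ⟨δ, hδ, hball⟩ := Metric.continuousWithinAt_iff.1 hfc r hr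
  obtain ⟨b, hab, hb⟩ := exists_rat_btwn (lt_min ha.2 (lt_add_of_pos_right a hδ))
  rw [lt_min_iff] at hb
  refine ⟨b, ⟨b, rfl⟩, ⟨hab, hb.1⟩,
    fun x hx => hball ⟨ha.1.le.trans hx.1, hx.2.trans hb.1.le⟩ ?_⟩
  rw [Real.dist_eq, abs_lt]
  constructor <;> linarith [hx.1, hx.2]

lemma qSet'_nonempty (hfc : ContinuousWithinAt f (Icc 0 1) 1) (ha : a ∈ Ioo (0:ℝ) 1)
    (hr : r < dist (f 1) (f a)) : (qSet' f a r).Nonempty := by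
  obtain ⟨δ, hδ, hball⟩ := Metric.continuousWithinAt_iff.1 hfc _ (sub_pos.2 hr)
  obtain ⟨b, hb, hb1⟩ := exists_rat_btwn (max_lt ha.2 (sub_lt_self 1 hδ))
  rw [max_lt_iff] at hb
  refine ⟨b, ⟨b, rfl⟩, ⟨hb.1, hb1⟩, fun hmem => ?_⟩
  have hb_near : dist (f b) (f 1) < dist (f 1) (f a) - r := by
    refine hball ⟨ha.1.le.trans hb.1.le, hb1.le⟩ ?_
    rw [Real.dist_eq, abs_lt]
    constructor <;> linarith
  have hb_in : dist (f b) (f a) ≤ r :=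
    Metric.mem_closedBall.1 (Metric.closure_ball_subset_closedBall hmem)
  linarith [dist_triangle_left (f 1) (f a) (f b)]

lemma qSet_lt_qSet' (hrr : r ≤ r') (hb : b ∈ qSet f a r) (hb' : b' ∈ qSet' f a r') : b < b' :=
  lt_of_not_ge fun h =>
    hb'.2.2 (subset_closure (Metric.ball_subset_ball hrr (hb.2.2 ⟨hb'.2.1.1.le, h⟩)))

lemma qTime_le_qTime'_s8 (hrr : r ≤ r') (hne : (qSet f a r).Nonempty)
    (hne' : (qSet' f a r').Nonempty) : qTime f a r ≤ qTime' f a r' :=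
  csSup_le hne fun _ hb => le_csInf hne' fun _ hb' => (qSet_lt_qSet' hrr hb hb').le

lemma qTime_mono (hrr : r ≤ r') (hne : (qSet f a r).Nonempty) :
    qTime f a r ≤ qTime f a r' :=
  csSup_le_csSup ⟨1, fun _ hb => hb.2.1.2.le⟩ hne fun _ hb =>
    ⟨hb.1, hb.2.1, hb.2.2.mono_right (Metric.ball_subset_ball hrr)⟩

lemma qTime'_mono (hrr : r ≤ r') (hne' : (qSet' f a r').Nonempty) :
    qTime' f a r ≤ qTime' f a r' :=
  csInf_le_csInf ⟨a, fun _ hb => hb.2.1.1.le⟩ hne' fun _ hb =>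
    ⟨hb.1, hb.2.1, fun hc => hb.2.2 (closure_mono (Metric.ball_subset_ball hrr) hc)⟩

lemma qTime_mem_Lint (hne : (qSet f a r).Nonempty) (hne' : (qSet' f a r).Nonempty) :
    qTime f a r ∈ Lint f a r :=
  ⟨le_rfl, qTime_le_qTime'_s8 le_rfl hne hne'⟩

lemma qTime'_mem_Lint (hne : (qSet f a r).Nonempty) (hne' : (qSet' f a r).Nonempty) :
    qTime' f a r ∈ Lint f a r :=
  ⟨qTime_le_qTime'_s8 le_rfl hne hne', le_rfl⟩

lemma Lint_union_subset_Icc (hrr : r ≤ r') (hne : (qSet f a r).Nonempty)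
    (hne' : (qSet' f a r').Nonempty) :
    Lint f a r ∪ Lint f a r' ⊆ Icc (qTime f a r) (qTime' f a r') := by
  rintro x (hx | hx)
  · exact ⟨hx.1, hx.2.trans (qTime'_mono hrr hne')⟩
  · exact ⟨(qTime_mono hrr hne).trans hx.1, hx.2⟩

lemma le_dist_one_of_closure_ball_subset (hf1 : f 1 = pt 1 1)
    (hball : closure (Metric.ball (f a) r) ⊆ openUnitSq) : r ≤ dist (f 1) (f a) := by
  by_contra! h
  have h1 := (hball (subset_closure (Metric.mem_ball.2 h))).2
  simp [hf1, pt] at h1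

end ExitTimes

section NestedIntervals

lemma biInter_Iic_Icc_eq {α : Type*} [LinearOrder α] (c d : ℕ → α) (n : ℕ) :
    ⋂ m ≤ n, Icc (c m) (d m) =
      Icc ((Finset.Iic n).sup' Finset.nonempty_Iic c)
        ((Finset.Iic n).inf' Finset.nonempty_Iic d) := by
  ext x
  simp [Finset.sup'_le_iff, Finset.le_inf'_iff, forall_and]

lemma iInter_Icc_eq_singleton {c d : ℕ → ℝ} {β : ℝ} (hβ : ∀ m, β ∈ Icc (c m) (d m))
    (hlen : Tendsto (fun m => d m - c m) atTop (𝓝 0)) :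
    ⋂ m, Icc (c m) (d m) = {β} := by
  refine Subset.antisymm (fun x hx => ?_) (singleton_subset_iff.2 (mem_iInter.2 hβ))
  have hdist : dist x β ≤ 0 :=
    ge_of_tendsto' hlen fun m => Real.dist_le_of_mem_Icc (mem_iInter.1 hx m) (hβ m)
  exact dist_le_zero.1 hdist

variable {S : ℕ → Set ℝ} {q Q c d : ℕ → ℝ}

theorem trapping_intervals_of_monotone_of_antitone (hq : Monotone q) (hQ : Antitone Q)
    (hqS : ∀ n, q n ∈ S n) (hQS : ∀ n, Q n ∈ S n) (hS : ∀ n, S n ⊆ Icc (q n) (Q n))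
    (hJ : ∀ n, S n ⊆ Ioo (c n) (d n)) (hlen : ∀ n, d n - c n < 2⁻¹ ^ n) :
    (∀ m n, m < n → S n ⊆ Ioo (c m) (d m)) ∧
    (∀ n : ℕ, ∃ u v : ℝ, u ≤ v ∧ (⋂ m ≤ n, closure (Ioo (c m) (d m))) = Icc u v ∧
      S n ⊆ Icc u v ∧ v - u < 2⁻¹ ^ n) ∧
    (∃ β : ℝ, (⋂ n : ℕ, ⋂ m ≤ n, closure (Ioo (c m) (d m))) = {β} ∧
      Tendsto q atTop (𝓝 β)) := by
  have hqQ : ∀ n, q n ≤ Q n := fun n => (hS n (hqS n)).2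
  have hIcc : ∀ n, Icc (q n) (Q n) ⊆ Ioo (c n) (d n) := fun n =>
    ordConnected_Ioo.out (hJ n (hqS n)) (hJ n (hQS n))
  have hsub : ∀ m n, m ≤ n → S n ⊆ Ioo (c m) (d m) := fun m n hmn =>
    (hS n).trans ((Icc_subset_Icc (hq hmn) (hQ hmn)).trans (hIcc m))
  have hclosure : ∀ m, closure (Ioo (c m) (d m)) = Icc (c m) (d m) := fun m =>
    closure_Ioo (nonempty_Ioo.1 ⟨q m, hJ m (hqS m)⟩).ne
  refine ⟨fun m n hmn => hsub m n hmn.le, fun n => ?_, ?_⟩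
  · have hT : S n ⊆ ⋂ m ≤ n, Icc (c m) (d m) := fun x hx =>
      mem_iInter₂.2 fun m hmn => Ioo_subset_Icc_self (hsub m n hmn hx)
    simp only [hclosure, biInter_Iic_Icc_eq] at hT ⊢
    refine ⟨_, _, nonempty_Icc.1 ⟨q n, hT (hqS n)⟩, rfl, hT, ?_⟩
    have hc := Finset.le_sup' c (Finset.mem_Iic.2 (le_refl n))
    have hd := Finset.inf'_le d (Finset.mem_Iic.2 (le_refl n))
    linarith [hlen n]
  · have hβ : ∀ m, (⨆ n, q n) ∈ Icc (c m) (d m) := fun m =>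
      Ioo_subset_Icc_self (hIcc m (mem_iInter.1 (hq.ciSup_mem_iInter_Icc_of_antitone hQ hqQ) m))
    have hlen0 : Tendsto (fun m => d m - c m) atTop (𝓝 0) :=
      squeeze_zero (fun m => sub_nonneg.2 ((hβ m).1.trans (hβ m).2)) (fun m => (hlen m).le)
        (tendsto_pow_atTop_nhds_zero_of_lt_one (by norm_num) (by norm_num))
    have hbdd : BddAbove (range q) :=
      ⟨Q 0, forall_mem_range.2 fun n => hq.forall_le_of_antitone hQ hqQ n 0⟩
    refine ⟨⨆ n, q n, ?_, tendsto_atTop_ciSup hq hbdd⟩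
    rw [← iInter_Icc_eq_singleton hβ hlen0]
    ext x
    simp only [hclosure, mem_iInter]
    exact ⟨fun h m => h m m le_rfl, fun h _ m _ => h m⟩

end NestedIntervals

theorem trapping_intervals_converge_general (f : ℝ → E2)
    (hfc : ContinuousOn f (Icc 0 1)) (hf1 : f 1 = pt 1 1)
    (a r s : ℚ) (ha : (a:ℝ) ∈ Ioo (0:ℝ) 1) (hr : (0:ℝ) < r)
    (hball : closure (Metric.ball (f a) s) ⊆ openUnitSq)
    (rn sn : ℕ → ℚ) (hr0 : r < rn 0) (hrmono : StrictMono rn) (hsanti : StrictAnti sn)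
    (hrsn : ∀ n m, rn n < sn m) (hs0 : sn 0 < s)
    (cJ dJ : ℕ → ℚ)
    (hJ : ∀ n, Lint f a (rn n) ∪ Lint f a (sn n) ⊆ Ioo (cJ n : ℝ) (dJ n))
    (hJlen : ∀ n, (dJ n : ℝ) - cJ n < 2⁻¹ ^ n) :
    (∀ m n, m < n → Lint f a (rn n) ∪ Lint f a (sn n) ⊆ Ioo (cJ m : ℝ) (dJ m)) ∧
    (∀ n : ℕ, ∃ u v : ℝ, u ≤ v ∧
      (⋂ m ≤ n, closure (Ioo (cJ m : ℝ) (dJ m))) = Icc u v ∧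
      Lint f a (rn n) ∪ Lint f a (sn n) ⊆ Icc u v ∧ v - u < 2⁻¹ ^ n) ∧
    (∃ β : ℝ, (⋂ n : ℕ, ⋂ m ≤ n, closure (Ioo (cJ m : ℝ) (dJ m))) = {β} ∧
      Tendsto (fun n => qTime f a (rn n)) atTop (𝓝 β)) := by
  have hne : ∀ ρ : ℝ, 0 < ρ → ρ < s →
      (qSet f a ρ).Nonempty ∧ (qSet' f a ρ).Nonempty :=
    fun ρ hρ hρs => ⟨qSet_nonempty (hfc a (Ioo_subset_Icc_self ha)) ha hρ,
      qSet'_nonempty (hfc 1 ⟨zero_le_one, le_rfl⟩) ha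
        (hρs.trans_le (le_dist_one_of_closure_ball_subset hf1 hball))⟩
  have hrn_pos : ∀ n, (0:ℝ) < rn n := fun n =>
    hr.trans (by exact_mod_cast hr0.trans_le (hrmono.monotone n.zero_le))
  have hrsn_le : ∀ n, (rn n : ℝ) ≤ sn n := fun n => by exact_mod_cast (hrsn n n).le
  have hsn_lt : ∀ n, (sn n : ℝ) < s := fun n => by
    exact_mod_cast (hsanti.antitone n.zero_le).trans_lt hs0
  have hne_r := fun n => hne _ (hrn_pos n) ((hrsn_le n).trans_lt (hsn_lt n))
  have hne_s := fun n => hne _ ((hrn_pos n).trans_le (hrsn_le n)) (hsn_lt n)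
  exact trapping_intervals_of_monotone_of_antitone
    (fun m n hmn => qTime_mono (by exact_mod_cast hrmono.monotone hmn) (hne_r m).1)
    (fun m n hmn => qTime'_mono (by exact_mod_cast hsanti.antitone hmn) (hne_s m).2)
    (fun n => Or.inl (qTime_mem_Lint (hne_r n).1 (hne_r n).2))
    (fun n => Or.inr (qTime'_mem_Lint (hne_s n).1 (hne_s n).2))
    (fun n => Lint_union_subset_Icc (hrsn_le n) (hne_r n).1 (hne_s n).2) hJ hJlen

/-- The nested rational intervals `J_n` trapping the exit intervals `L` shrink to a single
point `β`, which is the limit of the exit times `q_{a,r_n}`. -/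
theorem trapping_intervals_converge (f : ℝ → E2)
    (hfc : ContinuousOn f (Icc 0 1)) (hfm : MapsTo f (Icc 0 1) unitSq)
    (hf0 : f 0 = pt 0 0) (hf1 : f 1 = pt 1 1)
    (a r s : ℚ) (ha : (a:ℝ) ∈ Ioo (0:ℝ) 1) (hr : (0:ℝ) < r) (hrs : (r:ℝ) < s)
    (hball : closure (Metric.ball (f a) s) ⊆ openUnitSq)
    (rn sn : ℕ → ℚ) (hr0 : r < rn 0) (hrmono : StrictMono rn) (hsanti : StrictAnti sn)
    (hrsn : ∀ n m, rn n < sn m) (hs0 : sn 0 < s)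
    (cJ dJ : ℕ → ℚ)
    (hJ : ∀ n, Lint f a (rn n) ∪ Lint f a (sn n) ⊆ Ioo (cJ n : ℝ) (dJ n))
    (hJlen : ∀ n, (dJ n : ℝ) - cJ n < 2⁻¹ ^ n) :
    (∀ m n, m < n → Lint f a (rn n) ∪ Lint f a (sn n) ⊆ Ioo (cJ m : ℝ) (dJ m)) ∧
    (∀ n : ℕ, ∃ u v : ℝ, u ≤ v ∧
      (⋂ m ≤ n, closure (Ioo (cJ m : ℝ) (dJ m))) = Icc u v ∧
      Lint f a (rn n) ∪ Lint f a (sn n) ⊆ Icc u v ∧ v - u < 2⁻¹ ^ n) ∧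
    (∃ β : ℝ, (⋂ n : ℕ, ⋂ m ≤ n, closure (Ioo (cJ m : ℝ) (dJ m))) = {β} ∧
      Tendsto (fun n => qTime f a (rn n)) atTop (𝓝 β)) :=
  trapping_intervals_converge_general f hfc hf1 a r s ha hr hball rn sn hr0 hrmono hsanti hrsn hs0
    cJ dJ hJ hJlen
end
end

section
/- Let h : [0,1] → [-1,1] be continuous with h(0) = -1 and h(1) = 1. Assume that there is no pair of rationals u < v in [0,1] such that h is identically 0 on the interval (u,v). Then for all rationals a < b in [0,1] with h(a) < 0 < h(b), there exist rationals a', b' with a < a' < b' < b, b' - a' < (b - a)/2, h(a') < 0 and h(b') > 0. -/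
/-!
Let `c` be the supremum of the points of `[a, b]` where `h < 0`. Continuity forces `a < c < b`,
and `h ≥ 0` on `(c, b]`. Points with `h < 0` accumulate at `c` from the left, and since `h` is not
identically zero on any interval, points with `h > 0` accumulate at `c` from the right. Both sign
conditions are open, so each can be realised at a rational point, giving crossings around `c` of
arbitrarily small length.
-/

open Set

lemma exists_rat_mem_of_continuousOn {h : ℝ → ℝ} {s U V : Set ℝ} (hc : ContinuousOn h s)
    (hU : IsOpen U) (hV : IsOpen V) (hVs : V ⊆ s) {y : ℝ} (hyV : y ∈ V) (hyU : h y ∈ U) :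
    ∃ q : ℚ, (q : ℝ) ∈ V ∧ h q ∈ U :=
  Rat.denseRange_cast.exists_mem_open ((hc.mono hVs).isOpen_inter_preimage hV hU) ⟨y, hyV, hyU⟩

lemma exists_ne_zero_mem_Ioo_of_rat {h : ℝ → ℝ} {a b : ℝ}
    (hnz : ∀ u v : ℚ, a ≤ u → u < v → (v : ℝ) ≤ b → ∃ t ∈ Ioo (u : ℝ) v, h t ≠ 0)
    {x y : ℝ} (hax : a ≤ x) (hxy : x < y) (hyb : y ≤ b) : ∃ t ∈ Ioo x y, h t ≠ 0 := by
  obtain ⟨u, hxu, huy⟩ := exists_rat_btwn hxy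
  obtain ⟨v, huv, hvy⟩ := exists_rat_btwn huy
  obtain ⟨t, ht, hht⟩ := hnz u v (hax.trans hxu.le) (mod_cast huv) (hvy.le.trans hyb)
  exact ⟨t, ⟨hxu.trans ht.1, ht.2.trans hvy⟩, hht⟩

section LastNegative

variable {h : ℝ → ℝ} {a b : ℝ}

lemma lt_sSup_setOf_neg (hc : ContinuousOn h (Icc a b)) (hab : a < b) (ha : h a < 0) :
    a < sSup {x ∈ Icc a b | h x < 0} := by
  have hcont : ContinuousWithinAt h (Ioo a b) a :=
    (hc a ⟨le_rfl, hab.le⟩).mono Ioo_subset_Icc_self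
  have := left_nhdsWithin_Ioo_neBot hab
  obtain ⟨x, hx, hxab⟩ :=
    ((hcont.tendsto.eventually_lt_const ha).and self_mem_nhdsWithin).exists
  exact hxab.1.trans_le (le_csSup ⟨b, fun _ hy ↦ hy.1.2⟩ ⟨Ioo_subset_Icc_self hxab, hx⟩)

lemma sSup_setOf_neg_lt (hc : ContinuousOn h (Icc a b)) (hab : a ≤ b) (ha : h a < 0)
    (hb : 0 < h b) : sSup {x ∈ Icc a b | h x < 0} < b := by
  set S := {x ∈ Icc a b | h x < 0}
  have hS : S.Nonempty := ⟨a, ⟨le_rfl, hab⟩, ha⟩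
  set T := Icc a b ∩ h ⁻¹' Iic 0
  have hST : S ⊆ T := fun _ hx ↦ ⟨hx.1, hx.2.le⟩
  have hT : IsClosed T := hc.preimage_isClosed_of_isClosed isClosed_Icc isClosed_Iic
  have hsup : sSup S ∈ T := closure_minimal hST hT (csSup_mem_closure hS ⟨b, fun _ hy ↦ hy.1.2⟩)
  refine hsup.1.2.lt_of_ne fun hsb ↦ ?_
  have : h b ≤ 0 := hsb ▸ hsup.2
  linarith

end LastNegative

lemma exists_short_rat_crossing {h : ℝ → ℝ} {a b : ℝ} (hc : ContinuousOn h (Icc a b))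
    (hnz : ∀ x y, a ≤ x → x < y → y ≤ b → ∃ t ∈ Ioo x y, h t ≠ 0)
    (hab : a < b) (ha : h a < 0) (hb : 0 < h b) {δ : ℝ} (hδ : 0 < δ) :
    ∃ a' b' : ℚ, a < a' ∧ (a' : ℝ) < b' ∧ (b' : ℝ) < b ∧ (b' : ℝ) - a' < δ ∧
      h a' < 0 ∧ 0 < h b' := by
  set S := {x ∈ Icc a b | h x < 0}
  set c := sSup S
  have hS : BddAbove S := ⟨b, fun _ hx ↦ hx.1.2⟩
  have hSne : S.Nonempty := ⟨a, ⟨le_rfl, hab.le⟩, ha⟩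
  have hac : a < c := lt_sSup_setOf_neg hc hab ha
  have hcb : c < b := sSup_setOf_neg_lt hc hab.le ha hb
  set l := max a (c - δ / 2)
  set r := min b (c + δ / 2)
  have hlc : l < c := max_lt hac (by linarith)
  have hcr : c < r := lt_min hcb (by linarith)
  have hlr : r - l ≤ δ := by linarith [min_le_right b (c + δ / 2), le_max_right a (c - δ / 2)]
  have hsub : Ioo l r ⊆ Icc a b := fun x hx ↦
    ⟨(le_max_left _ _).trans hx.1.le, hx.2.le.trans (min_le_left _ _)⟩
  obtain ⟨x, hxS, hlx⟩ := exists_lt_of_lt_csSup hSne hlc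
  obtain ⟨a', ha'lr, ha'⟩ := exists_rat_mem_of_continuousOn hc isOpen_Iio isOpen_Ioo hsub
    ⟨hlx, (le_csSup hS hxS).trans_lt hcr⟩ hxS.2
  have ha'c : (a' : ℝ) ≤ c := le_csSup hS ⟨hsub ha'lr, ha'⟩
  obtain ⟨t, htcr, ht⟩ := hnz c r hac.le hcr (min_le_left _ _)
  have hpos : 0 < h t := by
    have hnonneg : 0 ≤ h t := not_lt.1 fun hneg ↦
      (le_csSup hS ⟨hsub ⟨hlc.trans htcr.1, htcr.2⟩, hneg⟩).not_gt htcr.1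
    exact hnonneg.lt_of_ne' ht
  obtain ⟨b', hb'cr, hb'⟩ := exists_rat_mem_of_continuousOn hc isOpen_Ioi isOpen_Ioo
    (fun x hx ↦ hsub ⟨hlc.trans hx.1, hx.2⟩) htcr hpos
  refine ⟨a', b', ?_, ha'c.trans_lt hb'cr.1, hb'cr.2.trans_le (min_le_left _ _), ?_, ha', hb'⟩
  · exact (le_max_left _ _).trans_lt ha'lr.1
  · linarith [ha'lr.1, hb'cr.2]

theorem crossing_shrinks_general (h : ℝ → ℝ)
    (hc : ContinuousOn h (Icc 0 1))
    (hnz : ¬ ∃ u v : ℚ, (0:ℝ) ≤ u ∧ (u:ℝ) < v ∧ (v:ℝ) ≤ 1 ∧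
      ∀ t ∈ Ioo (u:ℝ) (v:ℝ), h t = 0) :
    ∀ a b : ℚ, (0:ℝ) ≤ a → (a:ℝ) < b → (b:ℝ) ≤ 1 → h a < 0 → 0 < h b →
      ∃ a' b' : ℚ, (a:ℝ) < a' ∧ (a':ℝ) < b' ∧ (b':ℝ) < b ∧
        (b':ℝ) - a' < ((b:ℝ) - a) / 2 ∧ h a' < 0 ∧ 0 < h b' := by
  push Not at hnz
  intro a b ha0 hab hb1 ha hb
  have hnz_ab : ∀ u v : ℚ, (a : ℝ) ≤ u → u < v → (v : ℝ) ≤ b → ∃ t ∈ Ioo (u : ℝ) v, h t ≠ 0 :=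
    fun u v hau huv hvb ↦ hnz u v (ha0.trans hau) (mod_cast huv) (hvb.trans hb1)
  exact exists_short_rat_crossing (hc.mono (Icc_subset_Icc ha0 hb1))
    (fun x y hax hxy hyb ↦ exists_ne_zero_mem_Ioo_of_rat hnz_ab hax hxy hyb) hab ha hb (by linarith)

/-- If a continuous function `h : [0,1] → [-1,1]` with `h 0 = -1`, `h 1 = 1` vanishes
identically on no rational subinterval of `[0,1]`, then every rational crossing interval
contains a rational crossing interval of less than half its length, strictly inside it. -/
theorem crossing_shrinks (h : ℝ → ℝ)
    (hc : ContinuousOn h (Icc 0 1)) (hm : MapsTo h (Icc 0 1) (Icc (-1) 1))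
    (h0 : h 0 = -1) (h1 : h 1 = 1)
    (hnz : ¬ ∃ u v : ℚ, (0:ℝ) ≤ u ∧ (u:ℝ) < v ∧ (v:ℝ) ≤ 1 ∧
      ∀ t ∈ Ioo (u:ℝ) (v:ℝ), h t = 0) :
    ∀ a b : ℚ, (0:ℝ) ≤ a → (a:ℝ) < b → (b:ℝ) ≤ 1 → h a < 0 → 0 < h b →
      ∃ a' b' : ℚ, (a:ℝ) < a' ∧ (a':ℝ) < b' ∧ (b':ℝ) < b ∧
        (b':ℝ) - a' < ((b:ℝ) - a) / 2 ∧ h a' < 0 ∧ 0 < h b' :=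
  crossing_shrinks_general h hc hnz
end

section
/- Let f : [0,1] → [0,1]² be continuous with f(0) = (0,0), f(1) = (1,1), and let mod : ℚ_{>0} → ℚ_{>0} be nondecreasing such that for all rational γ > 0 and all a, b ∈ [0,1], |a - b| < mod(γ) implies ‖f(a) - f(b)‖ < γ. Let s ∈ ℚ, s > 0, and set ε_k := 2^{-k-1}·s. Let i ≥ 1 and let a_i, b_i, a_{i+1}, r_{i-1}, s_i, r_i be rationals satisfying: 0 < a_i < 1; cl B(f(a_i), s) ⊆ (0,1)²; s - Σ_{k=1}^{i-1} ε_k ≤ r_{i-1} ≤ s; with t_i := sup{ b ∈ ℚ : a_i < b ≤ 1 and f([a_i, b]) ⊆ B(f(a_i), r_{i-1}) }: a_i < b_i and t_i - mod(ε_i) < b_i < t_i; 0 < s_i < r_{i-1} and f([a_i, b_i]) ⊆ B(f(a_i), s_i); t_i - mod((r_{i-1} - s_i)/2) < a_{i+1} < t_i; and s_i < r_i < (s_i + r_{i-1})/2. Then: (1) r_i < r_{i-1}; (2) s - Σ_{k=1}^{i} ε_k < s_i; (3) f([a_i, b_i]) ⊆ B(f(a_i), r_i); (4) f([b_i, a_{i+1}])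 ⊆ B(f(a_{i+1}), s/2); (5) r_i < ‖f(a_i) - f(a_{i+1})‖ < 3s/2; (6) a_{i+1} ≥ a_i + mod(s/2). -/
open Set

/-!
The leave time `t` from the ball `B(f(aᵢ), rᵢ₋₁)` is approached from the right by times at which
`f` is at distance `≥ rᵢ₋₁` from `f(aᵢ)` (or `t` is close to `1`, and `f(1) = (1,1)` lies outside
`B(f(aᵢ), s) ⊆ (0,1)²`). By the modulus, any time within `mod γ` before `t` is therefore already
at distance `> rᵢ₋₁ - γ` from `f(aᵢ)`. At `bᵢ` with `γ = εᵢ` this gives `sᵢ > rᵢ₋₁ - εᵢ`, and at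
`aᵢ₊₁` with `γ = (rᵢ₋₁ - sᵢ)/2` it gives `‖f(aᵢ₊₁) - f(aᵢ)‖ > (rᵢ₋₁ + sᵢ)/2 > s/2`, which forces
`aᵢ₊₁ - aᵢ ≥ mod(s/2)`. The remaining bounds come from `bᵢ, aᵢ₊₁ ∈ (t - mod εᵢ, t)` and the
triangle inequality.
-/

noncomputable section

/-- `sup { b ∈ ℚ : a < b ≤ 1 and f([a,b]) ⊆ B(f(a), r) }`. -/
def leaveTime (f : ℝ → E2) (a r : ℝ) : ℝ :=
  sSup {b : ℝ | (∃ q : ℚ, (q:ℝ) = b) ∧ a < b ∧ b ≤ 1 ∧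
    MapsTo f (Icc a b) (Metric.ball (f a) r)}

section DyadicSums

variable {K : Type*} [Field K]

lemma sub_sum_Icc_div_two_pow_succ [NeZero (2 : K)] (s : K) (m : ℕ) :
    s - ∑ k ∈ Finset.Icc 1 m, s / 2 ^ (k + 1) = s / 2 + s / 2 ^ (m + 1) := by
  induction m with
  | zero => simp
  | succ n ih =>
    rw [Finset.sum_Icc_succ_top (by omega), sub_add_eq_sub_sub, ih, pow_succ 2 (n + 1)]
    field_simp
    ring

lemma sub_sum_Icc_pred_div_two_pow_succ [NeZero (2 : K)] (s : K) {m : ℕ} (hm : 1 ≤ m) :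
    s - ∑ k ∈ Finset.Icc 1 (m - 1), s / 2 ^ (k + 1) = s / 2 + 2 * (s / 2 ^ (m + 1)) := by
  rw [sub_sum_Icc_div_two_pow_succ, Nat.sub_add_cancel hm, pow_succ]
  field_simp

lemma div_two_pow_succ_le_div_four [LinearOrder K] [IsStrictOrderedRing K] {s : K} (hs : 0 ≤ s)
    {m : ℕ} (hm : 1 ≤ m) :
    s / 2 ^ (m + 1) ≤ s / 4 := by
  gcongr
  calc (4 : K) = 2 ^ 2 := by norm_num
    _ ≤ 2 ^ (m + 1) := pow_le_pow_right₀ (by norm_num) (by omega)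

end DyadicSums

lemma le_dist_pt_one_one_of_ball_subset {p : E2} {ρ : ℝ}
    (h : Metric.ball p ρ ⊆ openUnitSq) : ρ ≤ dist (pt 1 1) p := by
  by_contra! hlt
  have := h (Metric.mem_ball.2 hlt)
  simp [openUnitSq, pt] at this

section LeaveTime

variable {f : ℝ → E2} {a r c δ γ : ℝ}

lemma leaveTime_le_one : leaveTime f a r ≤ 1 :=
  Real.sSup_le (fun _ hb => hb.2.2.1) zero_le_one

lemma mapsTo_ball_of_lt_leaveTime (ha : 0 ≤ a) (hc : c < leaveTime f a r) :
    MapsTo f (Icc a c) (Metric.ball (f a) r) := by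
  unfold leaveTime at hc
  rcases eq_empty_or_nonempty {b : ℝ | (∃ q : ℚ, (q:ℝ) = b) ∧ a < b ∧ b ≤ 1 ∧
      MapsTo f (Icc a b) (Metric.ball (f a) r)} with hS | hS
  · rw [hS, Real.sSup_empty] at hc
    intro x hx
    linarith [hx.1, hx.2]
  · obtain ⟨b, ⟨-, -, -, hb⟩, hcb⟩ := exists_lt_of_lt_csSup hS hc
    exact hb.mono_left (Icc_subset_Icc_right hcb.le)

lemma exists_notMem_ball_of_leaveTime_lt (q : ℚ) (hq : leaveTime f a r < q) (haq : a < q)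
    (hq1 : (q : ℝ) ≤ 1) : ∃ x ∈ Icc a (q : ℝ), f x ∉ Metric.ball (f a) r := by
  by_contra! h
  exact hq.not_ge (le_csSup ⟨1, fun _ hb => hb.2.2.1⟩ ⟨⟨q, rfl⟩, haq, hq1, h⟩)

lemma add_le_leaveTime (hδ : 0 < δ) (h1 : a + δ ≤ 1)
    (hf : MapsTo f (Ico a (a + δ)) (Metric.ball (f a) r)) : a + δ ≤ leaveTime f a r := by
  by_contra! h
  obtain ⟨q, hq, hqδ⟩ := exists_rat_btwn (max_lt h (lt_add_of_pos_right a hδ))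
  have hqS : (q : ℝ) ≤ leaveTime f a r := by
    refine le_csSup ⟨1, fun _ hb => hb.2.2.1⟩ ⟨⟨q, rfl⟩, (le_max_right _ _).trans_lt hq,
      by linarith, hf.mono_left fun x hx => ⟨hx.1, hx.2.trans_lt hqδ⟩⟩
  linarith [le_max_left (leaveTime f a r) a]

lemma exists_le_norm_sub_of_near_leaveTime (ha : 0 ≤ a) (hac : a ≤ c)
    (hfar : r ≤ ‖f 1 - f a‖) (htc : leaveTime f a r - δ < c) (hct : c < leaveTime f a r) :
    ∃ x ∈ Icc (0:ℝ) 1, |x - c| < δ ∧ r ≤ ‖f x - f a‖ := by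
  have ht1 : leaveTime f a r ≤ 1 := leaveTime_le_one
  by_cases hcδ : c + δ ≤ 1
  · obtain ⟨q, hq, hqδ⟩ := exists_rat_btwn (max_lt (by linarith : leaveTime f a r < c + δ)
      (by linarith : c < c + δ))
    obtain ⟨x, hx, hfx⟩ := exists_notMem_ball_of_leaveTime_lt (f := f) (r := r) q
      ((le_max_left _ _).trans_lt hq) (by linarith [le_max_right (leaveTime f a r) c]) (by linarith)
    have hcx : c < x := by
      by_contra! hxc
      exact hfx (mapsTo_ball_of_lt_leaveTime ha hct ⟨hx.1, hxc⟩)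
    rw [Metric.mem_ball, dist_eq_norm, not_lt] at hfx
    refine ⟨x, ⟨by linarith [hx.1], by linarith [hx.2]⟩, ?_, hfx⟩
    rw [abs_of_pos (by linarith)]
    linarith [hx.2]
  · refine ⟨1, ⟨zero_le_one, le_rfl⟩, ?_, hfar⟩
    rw [abs_of_pos (by linarith)]
    linarith

variable (hmod : ∀ x ∈ Icc (0:ℝ) 1, ∀ y ∈ Icc (0:ℝ) 1, |x - y| < δ → ‖f x - f y‖ < γ)
include hmod

lemma add_le_of_le_norm_sub {b : ℝ} (ha : 0 ≤ a) (hab : a ≤ b) (hb : b ≤ 1)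
    (hγ : γ ≤ ‖f b - f a‖) : a + δ ≤ b := by
  by_contra! h
  have hba : |b - a| < δ := by
    rw [abs_of_nonneg (by linarith)]
    linarith
  linarith [hmod b ⟨ha.trans hab, hb⟩ a ⟨ha, hab.trans hb⟩ hba]

lemma add_le_leaveTime_of_modulus (ha : a ∈ Icc (0:ℝ) 1) (hδ : 0 < δ) (hγr : γ ≤ r)
    (hfar : r ≤ ‖f 1 - f a‖) : a + δ ≤ leaveTime f a r := by
  have h1 : a + δ ≤ 1 := add_le_of_le_norm_sub hmod ha.1 ha.2 le_rfl (hγr.trans hfar)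
  refine add_le_leaveTime hδ h1 fun x hx => ?_
  have hx1 : x ≤ 1 := by linarith [hx.2]
  rw [Metric.mem_ball, dist_eq_norm]
  refine (hmod x ⟨ha.1.trans hx.1, hx1⟩ a ha ?_).trans_le hγr
  rw [abs_of_nonneg (by linarith [hx.1])]
  linarith [hx.2]

lemma sub_lt_norm_sub_of_near_leaveTime (ha : 0 ≤ a) (hac : a ≤ c) (hfar : r ≤ ‖f 1 - f a‖)
    (htc : leaveTime f a r - δ < c) (hct : c < leaveTime f a r) :
    r - γ < ‖f c - f a‖ := by
  obtain ⟨x, hx, hxc, hrx⟩ := exists_le_norm_sub_of_near_leaveTime ha hac hfar htc hct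
  have hc : c ∈ Icc (0:ℝ) 1 := ⟨ha.trans hac, hct.le.trans leaveTime_le_one⟩
  have := hmod x hx c hc hxc
  have := norm_sub_le_norm_sub_add_norm_sub (f x) (f c) (f a)
  linarith

end LeaveTime

theorem chain_step_general (f : ℝ → E2)
    (hf1 : f 1 = pt 1 1)
    (mod : ℚ → ℚ)
    (hmodpos : ∀ γ : ℚ, 0 < γ → 0 < mod γ)
    (hmodmono : ∀ γ δ : ℚ, 0 < γ → γ ≤ δ → mod γ ≤ mod δ)
    (hmod : ∀ γ : ℚ, 0 < γ → ∀ x ∈ Icc (0:ℝ) 1, ∀ y ∈ Icc (0:ℝ) 1,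
      |x - y| < (mod γ : ℝ) → ‖f x - f y‖ < γ)
    (s : ℚ) (hs : 0 < s)
    (i : ℕ) (hi : 1 ≤ i)
    (ai bi ai1 rp si ri : ℚ)
    (hai : (ai:ℝ) ∈ Ioo (0:ℝ) 1)
    (hball : closure (Metric.ball (f ai) s) ⊆ openUnitSq)
    (hrp1 : s - ∑ k ∈ Finset.Icc 1 (i-1), s / 2 ^ (k+1) ≤ rp) (hrp2 : rp ≤ s)
    (hbi1 : ai < bi)
    (hbi2 : leaveTime f ai rp - (mod (s / 2 ^ (i+1)) : ℝ) < bi)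
    (hbi3 : (bi:ℝ) < leaveTime f ai rp)
    (hsi2 : si < rp)
    (hsi3 : MapsTo f (Icc (ai:ℝ) bi) (Metric.ball (f ai) si))
    (hai11 : leaveTime f ai rp - (mod ((rp - si)/2) : ℝ) < ai1)
    (hai12 : (ai1:ℝ) < leaveTime f ai rp)
    (hri1 : si < ri) (hri2 : ri < (si + rp)/2) :
    ri < rp ∧
    s - ∑ k ∈ Finset.Icc 1 i, s / 2 ^ (k+1) < si ∧
    MapsTo f (Icc (ai:ℝ) bi) (Metric.ball (f ai) ri) ∧
    MapsTo f (Icc (bi:ℝ) ai1) (Metric.ball (f ai1) ((s:ℝ)/2)) ∧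
    ((ri:ℝ) < ‖f ai - f ai1‖ ∧ ‖f ai - f ai1‖ < 3*(s:ℝ)/2) ∧
    (ai:ℝ) + (mod (s/2) : ℝ) ≤ ai1 := by
  rw [sub_sum_Icc_pred_div_two_pow_succ s hi] at hrp1
  rw [sub_sum_Icc_div_two_pow_succ]
  have hε4 : ((s / 2 ^ (i + 1) : ℚ) : ℝ) ≤ s / 4 := by
    exact_mod_cast div_two_pow_succ_le_div_four hs.le hi
  set ε : ℚ := s / 2 ^ (i + 1)
  set g : ℚ := (rp - si) / 2 with hg_def
  set t := leaveTime f ai rp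
  have hε : 0 < ε := by positivity
  have hsR : (0:ℝ) < s := by exact_mod_cast hs
  have ha0 : (0:ℝ) ≤ ai := hai.1.le
  have hbi : (ai:ℝ) < bi := by exact_mod_cast hbi1
  have hfar : (rp : ℝ) ≤ ‖f 1 - f ai‖ := by
    rw [← dist_eq_norm, hf1]
    exact (Rat.cast_le.2 hrp2).trans
      (le_dist_pt_one_one_of_ball_subset (subset_closure.trans hball))
  have hbi_si : ‖f bi - f ai‖ < si := by
    simpa only [Metric.mem_ball, dist_eq_norm] using hsi3 ⟨hbi.le, le_rfl⟩
  have hsi : rp - ε < si := by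
    exact_mod_cast
      (sub_lt_norm_sub_of_near_leaveTime (hmod ε hε) ha0 hbi.le hfar hbi2 hbi3).trans hbi_si
  have hg : 0 < g := by linarith
  have hmod_g : (mod g : ℝ) ≤ mod ε := by exact_mod_cast hmodmono g ε hg (by linarith)
  have hai1 : (ai:ℝ) < ai1 := by
    have := add_le_leaveTime_of_modulus (hmod g hg) ⟨ha0, hai.2.le⟩
      (by exact_mod_cast hmodpos g hg) (by exact_mod_cast (by linarith : g ≤ rp)) hfar
    linarith
  have hai1_far : ((rp + si) / 2 : ℝ) < ‖f ai1 - f ai‖ := by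
    have := sub_lt_norm_sub_of_near_leaveTime (hmod g hg) ha0 hai1.le hfar hai11 hai12
    push_cast [hg_def] at this
    linarith
  have ht1 : t ≤ 1 := leaveTime_le_one
  have hnear : ∀ x ∈ Icc (bi:ℝ) t, ‖f x - f ai1‖ < ε := fun x hx =>
    hmod ε hε x ⟨by linarith [hx.1], hx.2.trans ht1⟩ ai1 ⟨by linarith, by linarith⟩
      (abs_sub_lt_iff.2 ⟨by linarith [hx.2], by linarith [hx.1]⟩)
  refine ⟨by linarith, ?_, hsi3.mono_right (Metric.ball_subset_ball (by exact_mod_cast hri1.le)),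
    fun x hx => ?_, ⟨?_, ?_⟩, ?_⟩
  · linarith
  · rw [Metric.mem_ball, dist_eq_norm]
    have := hnear x ⟨hx.1, hx.2.trans hai12.le⟩
    linarith
  · rw [norm_sub_rev]
    have : (ri : ℝ) < (si + rp) / 2 := by exact_mod_cast hri2
    linarith
  · have : (si : ℝ) < s := by exact_mod_cast hsi2.trans_le hrp2
    linarith [norm_sub_le_norm_sub_add_norm_sub (f ai) (f bi) (f ai1), norm_sub_rev (f ai) (f bi),
      hnear bi ⟨le_rfl, hbi3.le⟩]
  · refine add_le_of_le_norm_sub (hmod (s / 2) (by positivity)) ha0 hai1.le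
      (hai12.le.trans ht1) ?_
    have : (s / 2 : ℝ) < (rp + si) / 2 := by exact_mod_cast (by linarith : s / 2 < (rp + si) / 2)
    push_cast
    linarith

/-- One step of the chain-of-balls construction: properties of `aᵢ, bᵢ, aᵢ₊₁, rᵢ₋₁, sᵢ, rᵢ`. -/
theorem chain_step (f : ℝ → E2)
    (hfc : ContinuousOn f (Icc 0 1)) (hfm : MapsTo f (Icc 0 1) unitSq)
    (hf0 : f 0 = pt 0 0) (hf1 : f 1 = pt 1 1)
    (mod : ℚ → ℚ)
    (hmodpos : ∀ γ : ℚ, 0 < γ → 0 < mod γ)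
    (hmodmono : ∀ γ δ : ℚ, 0 < γ → γ ≤ δ → mod γ ≤ mod δ)
    (hmod : ∀ γ : ℚ, 0 < γ → ∀ x ∈ Icc (0:ℝ) 1, ∀ y ∈ Icc (0:ℝ) 1,
      |x - y| < (mod γ : ℝ) → ‖f x - f y‖ < γ)
    (s : ℚ) (hs : 0 < s)
    (i : ℕ) (hi : 1 ≤ i)
    (ai bi ai1 rp si ri : ℚ)
    (hai : (ai:ℝ) ∈ Ioo (0:ℝ) 1)
    (hball : closure (Metric.ball (f ai) s) ⊆ openUnitSq)
    (hrp1 : s - ∑ k ∈ Finset.Icc 1 (i-1), s / 2 ^ (k+1) ≤ rp) (hrp2 : rp ≤ s)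
    (hbi1 : ai < bi)
    (hbi2 : leaveTime f ai rp - (mod (s / 2 ^ (i+1)) : ℝ) < bi)
    (hbi3 : (bi:ℝ) < leaveTime f ai rp)
    (hsi1 : 0 < si) (hsi2 : si < rp)
    (hsi3 : MapsTo f (Icc (ai:ℝ) bi) (Metric.ball (f ai) si))
    (hai11 : leaveTime f ai rp - (mod ((rp - si)/2) : ℝ) < ai1)
    (hai12 : (ai1:ℝ) < leaveTime f ai rp)
    (hri1 : si < ri) (hri2 : ri < (si + rp)/2) :
    ri < rp ∧
    s - ∑ k ∈ Finset.Icc 1 i, s / 2 ^ (k+1) < si ∧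
    MapsTo f (Icc (ai:ℝ) bi) (Metric.ball (f ai) ri) ∧
    MapsTo f (Icc (bi:ℝ) ai1) (Metric.ball (f ai1) ((s:ℝ)/2)) ∧
    ((ri:ℝ) < ‖f ai - f ai1‖ ∧ ‖f ai - f ai1‖ < 3*(s:ℝ)/2) ∧
    (ai:ℝ) + (mod (s/2) : ℝ) ≤ ai1 :=
  chain_step_general f hf1 mod hmodpos hmodmono hmod s hs i hi ai bi ai1 rp si ri hai hball hrp1
    hrp2 hbi1 hbi2 hbi3 hsi2 hsi3 hai11 hai12 hri1 hri2
end
end
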